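/- arXiv:1207.6189 — 4 statements merged into one kernel-verified Lean document; each statement's English description precedes it below -/
import Mathlib

section
/- Let k be a p-adic field with odd residue characteristic and residue field of cardinality q, k'/k the unramified quadratic extension, π a uniformizer, j the 2n×2n anti-diagonal identity. If x ∈ GL_{2n}(k') satisfies x* = x and x ≡ c·j (mod π) with c = ±1, then the characteristic polynomial of x·j is not equal to (t²−1)ⁿ. -/
open Matrix Polynomial

lemma eval_charpoly_aux {R : Type*} [CommRing R] {m : ℕ} (M : Matrix (Fin m) (Fin m) R)
    (a : R) : M.charpoly.eval a = (a • (1 : Matrix (Fin m) (Fin m) R) - M).det := by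
  rw [Matrix.charpoly, ← Polynomial.coe_evalRingHom, RingHom.map_det]
  congr 1
  ext i j
  by_cases h : i = j <;>
    simp [Matrix.charmatrix_apply, Matrix.map_apply, Matrix.diagonal, h, Matrix.one_apply]

/-- if `x ∈ GL_{2n}(k')` is hermitian and `x ≡ c·j (mod π)` with
`c = ±1` (odd residue characteristic, unramified quadratic extension), then the
characteristic polynomial of `x·j` is not `(t² − 1)ⁿ`. -/
theorem stmt5 (p : ℕ) [Fact p.Prime] (hp : p ≠ 2)
    (k : Type*) [Field k] [Algebra ℚ_[p] k] [FiniteDimensional ℚ_[p] k]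
    [Algebra ℤ_[p] k] [IsScalarTower ℤ_[p] ℚ_[p] k]
    (k' : Type*) [Field k'] [Algebra k k'] (hquad : Module.finrank k k' = 2)
    [Algebra ℚ_[p] k'] [Algebra ℤ_[p] k']
    [IsScalarTower ℤ_[p] ℚ_[p] k'] [IsScalarTower ℚ_[p] k k']
    (σ : k' ≃ₐ[k] k') (hσ : σ ≠ AlgEquiv.refl)
    (π : k) (hπ : π ∈ integralClosure ℤ_[p] k)
    (hπirr : Irreducible (⟨π, hπ⟩ : integralClosure ℤ_[p] k))
    (hπ' : algebraMap k k' π ∈ integralClosure ℤ_[p] k')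
    (hunram : Irreducible (⟨algebraMap k k' π, hπ'⟩ : integralClosure ℤ_[p] k'))
    (n : ℕ) (hn : 1 ≤ n)
    (J : Matrix (Fin (2 * n)) (Fin (2 * n)) k')
    (hJ : J = Matrix.of fun a b : Fin (2 * n) => if (a : ℕ) + (b : ℕ) + 1 = 2 * n then 1 else 0)
    (x : Matrix (Fin (2 * n)) (Fin (2 * n)) k') (hx : IsUnit x)
    (hxherm : (x.map σ)ᵀ = x)
    (c : k') (hc : c = 1 ∨ c = -1)
    (hcong : ∀ i j, ∃ y ∈ integralClosure ℤ_[p] k',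
      x i j - c * J i j = algebraMap k k' π * y) :
    (x * J).charpoly ≠ (X ^ 2 - 1) ^ n := by
  intro hch
  set R := integralClosure ℤ_[p] k' with hR
  set π' : k' := algebraMap k k' π with hπ'def
  have hcR : c ∈ R := by rcases hc with rfl | rfl
                         · exact one_mem _
                         · exact neg_mem (one_mem _)
  have hc2 : c * c = 1 := by rcases hc with rfl | rfl <;> ring
  have hJmem : ∀ a b, J a b ∈ R := by
    intro a b
    rw [hJ]
    simp only [Matrix.of_apply]
    split
    · exact one_mem _
    · exact zero_mem _
  choose y hyR hy using hcong
  -- J * J = 1 entrywise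
  have hJJ : ∀ i j, (∑ a, J i a * J a j) = if i = j then (1 : k') else 0 := by
    intro i j
    have h1 : ∀ a : Fin (2 * n), J i a = if a = Fin.rev i then (1 : k') else 0 := by
      intro a
      rw [hJ]
      simp only [Matrix.of_apply]
      congr 1
      simp only [eq_iff_iff, Fin.ext_iff, Fin.val_rev]
      omega
    simp_rw [h1, ite_mul, one_mul, zero_mul]
    rw [Finset.sum_ite_eq' Finset.univ (Fin.rev i) (fun a => J a j)]
    simp only [Finset.mem_univ, if_true]
    rw [hJ]
    simp only [Matrix.of_apply]
    congr 1
    simp only [eq_iff_iff, Fin.val_rev]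
    constructor
    · intro h; ext; omega
    · intro h; subst h; omega
  -- the matrix M = x*J + c•1
  set M : Matrix (Fin (2 * n)) (Fin (2 * n)) k' := x * J + c • 1 with hM
  -- entrywise decomposition of M
  have hMdec : ∀ i j, M i j = (2 * c) * (if i = j then (1:k') else 0)
      + π' * (∑ a, y i a * J a j) := by
    intro i j
    have hxa : ∀ a, x i a = c * J i a + π' * y i a := by
      intro a; have := hy i a; linear_combination this
    rw [hM]
    simp only [Matrix.add_apply, Matrix.mul_apply, Matrix.smul_apply, Matrix.one_apply,
      smul_eq_mul]
    simp_rw [hxa, add_mul]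
    rw [Finset.sum_add_distrib]
    have e1 : (∑ a, c * J i a * J a j) = c * ∑ a, J i a * J a j := by
      rw [Finset.mul_sum]; congr 1; ext a; ring
    have e2 : (∑ a, π' * y i a * J a j) = π' * ∑ a, y i a * J a j := by
      rw [Finset.mul_sum]; congr 1; ext a; ring
    rw [e1, e2, hJJ i j]
    ring
  have hMmem : ∀ i j, M i j ∈ R := by
    intro i j
    rw [hMdec i j]
    refine add_mem (mul_mem (mul_mem ?_ hcR) ?_) (mul_mem hπ' (sum_mem fun a _ => mul_mem (hyR i a) (hJmem a j)))
    · have h2 : (2 : k') = 1 + 1 := by norm_num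
      rw [h2]; exact add_mem (one_mem _) (one_mem _)
    · split
      · exact one_mem _
      · exact zero_mem _
  -- det M = 0 from the charpoly hypothesis
  have hdetM : M.det = 0 := by
    have h1 : ((x * J).charpoly).eval (-c) = 0 := by
      rw [hch]
      simp only [eval_pow, eval_sub, eval_one, eval_pow, eval_X]
      have : (-c) ^ 2 - 1 = 0 := by linear_combination hc2
      rw [this, zero_pow (by omega)]
    rw [eval_charpoly_aux] at h1
    have h2 : (-c) • (1 : Matrix (Fin (2*n)) (Fin (2*n)) k') - x * J = (-1 : k') • M := by
      rw [hM]; ext i j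
      simp only [Matrix.smul_apply, Matrix.sub_apply, Matrix.add_apply, smul_eq_mul]
      ring
    rw [h2, Matrix.det_smul, Fintype.card_fin] at h1
    have h3 : ((-1 : k')) ^ (2 * n) = 1 := by
      rw [pow_mul]; norm_num
    rw [h3, one_mul] at h1
    exact h1
  -- lift to R
  set X' : Matrix (Fin (2*n)) (Fin (2*n)) R := fun i j => (⟨M i j, hMmem i j⟩ : R) with hX'
  have hdetX' : X'.det = 0 := by
    have hmap : (Subalgebra.val R).toRingHom.mapMatrix X' = M := by
      ext i j; rfl
    apply Subtype.ext
    have hval : ((X'.det : R) : k') = M.det := by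
      rw [← hmap]
      exact (Subalgebra.val R).toRingHom.map_det X'
    rw [hval, hdetM]; rfl
  set pπ : R := (⟨π', hπ'⟩ : R) with hpπ
  set c' : R := (⟨c, hcR⟩ : R) with hc'
  set D : Matrix (Fin (2*n)) (Fin (2*n)) R := Matrix.diagonal (fun _ => c' + c') with hD
  set I : Ideal R := Ideal.span {pπ} with hI
  set f : R →+* R ⧸ I := Ideal.Quotient.mk I with hf
  have hcongI : ∀ i j, X' i j - D i j ∈ I := by
    intro i j
    rw [hI, Ideal.mem_span_singleton]
    refine ⟨⟨∑ a, y i a * J a j, sum_mem fun a _ => mul_mem (hyR i a) (hJmem a j)⟩, ?_⟩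
    have hDval : ((D i j : R) : k') = (c + c) * (if i = j then (1:k') else 0) := by
      by_cases h : i = j <;>
        simp [hD, hc', Matrix.diagonal_apply, h]
    apply Subtype.ext
    push_cast
    rw [hDval]
    show M i j - (c + c) * (if i = j then (1:k') else 0) = π' * ∑ a, y i a * J a j
    rw [hMdec i j]
    ring
  have hmapeq : f.mapMatrix X' = f.mapMatrix D := by
    ext i j
    simp only [RingHom.mapMatrix_apply, Matrix.map_apply]
    exact Ideal.Quotient.eq.mpr (hcongI i j)
  have hdetD : D.det = (c' + c') ^ (2 * n) := by
    rw [hD, Matrix.det_diagonal, Finset.prod_const, Finset.card_univ, Fintype.card_fin]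
  have hdvd : pπ ∣ (c' + c') ^ (2 * n) := by
    have h0 : f ((c' + c') ^ (2 * n)) = 0 := by
      rw [← hdetD, RingHom.map_det, ← hmapeq, ← RingHom.map_det, hdetX', map_zero]
    rwa [hf, Ideal.Quotient.eq_zero_iff_mem, hI, Ideal.mem_span_singleton] at h0
  have hc'2 : c' * c' = 1 := by
    apply Subtype.ext; push_cast; exact hc2
  have hpow : (c' + c') ^ (2 * n) = (2 : R) ^ (2 * n) := by
    have h2c : c' + c' = 2 * c' := by ring
    rw [h2c, mul_pow]
    have : c' ^ (2 * n) = 1 := by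
      rw [pow_mul]
      have : c' ^ 2 = 1 := by rw [sq]; exact hc'2
      rw [this, one_pow]
    rw [this, mul_one]
  have h2unit : IsUnit (2 : R) := by
    have h2Z : IsUnit (2 : ℤ_[p]) := by
      rw [PadicInt.isUnit_iff]
      have hle : ‖(2 : ℤ_[p])‖ ≤ 1 := PadicInt.norm_le_one _
      have hnlt : ¬ ‖(2 : ℤ_[p])‖ < 1 := by
        have : ((2 : ℤ) : ℤ_[p]) = (2 : ℤ_[p]) := by norm_num
        rw [← this, PadicInt.norm_int_lt_one_iff_dvd]
        intro hdvd2
        have hp2 : p ∣ 2 := by exact_mod_cast hdvd2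
        exact hp ((Nat.prime_dvd_prime_iff_eq Fact.out Nat.prime_two).mp hp2)
      linarith [lt_or_eq_of_le hle]
    have := h2Z.map (algebraMap ℤ_[p] R)
    rwa [map_ofNat] at this
  have hunit : IsUnit ((c' + c') ^ (2 * n)) := by
    rw [hpow]; exact h2unit.pow _
  exact hunram.not_isUnit (isUnit_of_dvd_unit hdvd hunit)
end

section
/- Let W = S_n ⋉ {±1}ⁿ act on the Laurent polynomial ring R = ℂ[x₁^{±1},…,x_n^{±1}] by permuting variables and inverting variables (x_i ↦ x_i^{−1}). Then the invariant ring R^W equals ℂ[x₁+x₁⁻¹, …, x_n+x_n⁻¹]^{S_n}, and R^W is a free module of rank 2ⁿ over the subring R₀ = ℂ[x₁²+x₁⁻², …, x_n²+x_n⁻²]^{S_n}. -/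
/-- The Laurent polynomial ring `ℂ[x₁^{±1},…,x_n^{±1}]` as the group algebra of
`ℤⁿ`. -/
abbrev LaurentRing (n : ℕ) := AddMonoidAlgebra ℂ (Fin n → ℤ)

/-- The monomial `x^d`. -/
noncomputable def lmono (n : ℕ) (d : Fin n → ℤ) : LaurentRing n :=
  AddMonoidAlgebra.ofCoeff (Finsupp.single d 1)

/-- The action of `(σ, ε) ∈ S_n ⋉ {±1}ⁿ` on Laurent polynomials, permuting the
variables by `σ` and inverting the variables with `ε i = −1`. -/
noncomputable def wAct (n : ℕ) (σ : Equiv.Perm (Fin n)) (ε : Fin n → ℤˣ)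
    (f : LaurentRing n) : LaurentRing n :=
  AddMonoidAlgebra.ofCoeff (Finsupp.mapDomain (fun d : Fin n → ℤ => fun i => (ε i : ℤ) * d (σ⁻¹ i)) f.coeff)

namespace Stmt10
open Finsupp Equiv
variable {n : ℕ}

abbrev Pt (n : ℕ) := Fin n → ℤ

def act (σ : Perm (Fin n)) (ε : Fin n → ℤˣ) (d : Pt n) : Pt n :=
  fun i => (ε i : ℤ) * d (σ⁻¹ i)

lemma act_add (σ : Perm (Fin n)) (ε) (a b : Pt n) :
    act σ ε (a + b) = act σ ε a + act σ ε b := by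
  funext i; simp [act, mul_add]

lemma act_zero (σ : Perm (Fin n)) (ε) : act σ ε (0 : Pt n) = 0 := by
  funext i; simp [act]

def actHom (σ : Perm (Fin n)) (ε : Fin n → ℤˣ) : Pt n →+ Pt n :=
  ⟨⟨act σ ε, act_zero σ ε⟩, act_add σ ε⟩

@[simp] lemma actHom_apply (σ : Perm (Fin n)) (ε) (d : Pt n) : actHom σ ε d = act σ ε d := rfl

lemma act_act (σ σ' : Perm (Fin n)) (ε ε') (d : Pt n) :
    act σ ε (act σ' ε' d) = act (σ * σ') (fun i => ε i * ε' (σ⁻¹ i)) d := by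
  funext i
  simp [act, mul_assoc, Equiv.Perm.mul_apply]

lemma act_one_one (d : Pt n) : act 1 (fun _ => 1) d = d := by
  funext i; simp [act]

/-- inverse of the element (σ, ε) -/
def invσ (σ : Perm (Fin n)) : Perm (Fin n) := σ⁻¹
def invε (σ : Perm (Fin n)) (ε : Fin n → ℤˣ) : Fin n → ℤˣ := fun i => ε (σ i)

lemma act_inv_act (σ : Perm (Fin n)) (ε) (d : Pt n) :
    act σ⁻¹ (invε σ ε) (act σ ε d) = d := by
  funext i
  simp [act, invε, ← mul_assoc]

lemma act_act_inv (σ : Perm (Fin n)) (ε) (d : Pt n) :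
    act σ ε (act σ⁻¹ (invε σ ε) d) = d := by
  funext i
  simp [act, invε, ← mul_assoc]

def actEquiv (σ : Perm (Fin n)) (ε : Fin n → ℤˣ) : Pt n ≃ Pt n :=
  ⟨act σ ε, act σ⁻¹ (invε σ ε), act_inv_act σ ε, act_act_inv σ ε⟩

lemma act_injective (σ : Perm (Fin n)) (ε) : Function.Injective (act σ ε : Pt n → Pt n) :=
  (actEquiv σ ε).injective

noncomputable instance : CoeFun (LaurentRing n) (fun _ => Pt n → ℂ) := ⟨fun f => f.coeff⟩

lemma lsum_apply {ι : Type*} (s : Finset ι) (g : ι → LaurentRing n) (d : Pt n) :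
    (∑ i ∈ s, g i) d = ∑ i ∈ s, g i d := by
  rw [AddMonoidAlgebra.coeff_sum, Finsupp.finset_sum_apply]

lemma lsingle_apply {a a' : Pt n} {b : ℂ} [Decidable (a = a')] :
    (AddMonoidAlgebra.single a b : LaurentRing n) a' = if a = a' then b else 0 :=
  Finsupp.single_apply

lemma lsmul_apply (c : ℂ) (f : LaurentRing n) (d : Pt n) : (c • f) d = c • f d :=
  AddMonoidAlgebra.coeff_smul_apply c f d

lemma lsub_apply (f g : LaurentRing n) (d : Pt n) : (f - g) d = f d - g d := by
  rw [AddMonoidAlgebra.coeff_sub, Finsupp.sub_apply]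

lemma ladd_apply (f g : LaurentRing n) (d : Pt n) : (f + g) d = f d + g d := by
  rw [AddMonoidAlgebra.coeff_add, Finsupp.add_apply]

/-! ### wAct infrastructure -/

noncomputable def wAlg (σ : Perm (Fin n)) (ε : Fin n → ℤˣ) :
    LaurentRing n →ₐ[ℂ] LaurentRing n :=
  AddMonoidAlgebra.mapDomainAlgHom ℂ ℂ (actHom σ ε)

lemma wAct_eq (σ : Perm (Fin n)) (ε) (f : LaurentRing n) :
    wAct n σ ε f = wAlg σ ε f := rfl

lemma wAct_single (σ : Perm (Fin n)) (ε) (d : Pt n) (c : ℂ) :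
    wAct n σ ε (AddMonoidAlgebra.single d c) = AddMonoidAlgebra.single (act σ ε d) c :=
  congrArg AddMonoidAlgebra.ofCoeff Finsupp.mapDomain_single

lemma wAct_apply (σ : Perm (Fin n)) (ε) (f : LaurentRing n) (d : Pt n) :
    wAct n σ ε f d = f (act σ⁻¹ (invε σ ε) d) := by
  have : (wAct n σ ε f).coeff = Finsupp.mapDomain (actEquiv σ ε : Pt n ≃ Pt n) f.coeff := rfl
  rw [this, Finsupp.mapDomain_equiv_apply]
  rfl

lemma wAct_wAct (σ σ' : Perm (Fin n)) (ε ε') (f : LaurentRing n) :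
    wAct n σ ε (wAct n σ' ε' f) = wAct n (σ * σ') (fun i => ε i * ε' (σ⁻¹ i)) f := by
  unfold wAct
  rw [AddMonoidAlgebra.coeff_ofCoeff, ← Finsupp.mapDomain_comp]
  congr 2
  funext d
  exact act_act σ σ' ε ε' d

/-! ### invariants -/

def IsInv (f : LaurentRing n) : Prop := ∀ σ ε, wAct n σ ε f = f

lemma isInv_apply_act {f : LaurentRing n} (hf : IsInv f) (σ : Perm (Fin n)) (ε) (d : Pt n) :
    f (act σ ε d) = f d := by
  conv_lhs => rw [← hf σ ε]
  exact Finsupp.mapDomain_apply (act_injective σ ε) f.coeff d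

lemma isInv_of_forall {f : LaurentRing n} (h : ∀ (σ : Perm (Fin n)) ε (d : Pt n), f (act σ ε d) = f d) :
    IsInv f := by
  intro σ ε
  ext d
  rw [wAct_apply]
  exact h _ _ d

lemma IsInv.add {f g : LaurentRing n} (hf : IsInv f) (hg : IsInv g) : IsInv (f + g) := by
  intro σ ε; rw [wAct_eq, map_add, ← wAct_eq, ← wAct_eq, hf σ ε, hg σ ε]

lemma IsInv.mul {f g : LaurentRing n} (hf : IsInv f) (hg : IsInv g) : IsInv (f * g) := by
  intro σ ε; rw [wAct_eq, map_mul, ← wAct_eq, ← wAct_eq, hf σ ε, hg σ ε]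

lemma IsInv.smul {f : LaurentRing n} (c : ℂ) (hf : IsInv f) : IsInv (c • f) := by
  intro σ ε; rw [wAct_eq, map_smul, ← wAct_eq, hf σ ε]

lemma IsInv.sub {f g : LaurentRing n} (hf : IsInv f) (hg : IsInv g) : IsInv (f - g) := by
  intro σ ε; rw [wAct_eq, map_sub, ← wAct_eq, ← wAct_eq, hf σ ε, hg σ ε]

lemma IsInv.neg {f : LaurentRing n} (hf : IsInv f) : IsInv (-f) := by
  intro σ ε; rw [wAct_eq, map_neg, ← wAct_eq, hf σ ε]

lemma IsInv.zero : IsInv (0 : LaurentRing n) := fun σ ε => by rw [wAct_eq, map_zero]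

lemma IsInv.one : IsInv (1 : LaurentRing n) := fun σ ε => by rw [wAct_eq, map_one]

lemma IsInv.sum {ι : Type*} {s : Finset ι} {F : ι → LaurentRing n}
    (h : ∀ i ∈ s, IsInv (F i)) : IsInv (∑ i ∈ s, F i) := by
  intro σ ε
  rw [wAct_eq, map_sum]
  exact Finset.sum_congr rfl fun i hi => by rw [← wAct_eq, h i hi σ ε]

/-! ### orbits -/

noncomputable def orbit (l : Pt n) : Finset (Pt n) :=
  Finset.image (fun w : Perm (Fin n) × (Fin n → ℤˣ) => act w.1 w.2 l) Finset.univ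

lemma mem_orbit {l d : Pt n} : d ∈ orbit l ↔ ∃ σ ε, act σ ε l = d := by
  simp [orbit, Prod.exists]

lemma self_mem_orbit (l : Pt n) : l ∈ orbit l :=
  mem_orbit.2 ⟨1, fun _ => 1, act_one_one l⟩

lemma act_mem_orbit (σ : Perm (Fin n)) (ε) {l d : Pt n} (h : d ∈ orbit l) :
    act σ ε d ∈ orbit l := by
  obtain ⟨σ', ε', rfl⟩ := mem_orbit.1 h
  exact mem_orbit.2 ⟨_, _, (act_act σ σ' ε ε' l).symm⟩

lemma orbit_subset_of_mem {l d : Pt n} (h : d ∈ orbit l) : orbit d ⊆ orbit l := by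
  intro e he
  obtain ⟨σ, ε, rfl⟩ := mem_orbit.1 he
  exact act_mem_orbit σ ε h

lemma mem_orbit_symm {l d : Pt n} (h : d ∈ orbit l) : l ∈ orbit d := by
  obtain ⟨σ, ε, rfl⟩ := mem_orbit.1 h
  have := act_mem_orbit σ⁻¹ (invε σ ε) (self_mem_orbit (act σ ε l))
  rwa [act_inv_act] at this

lemma orbit_eq_of_mem {l d : Pt n} (h : d ∈ orbit l) : orbit d = orbit l :=
  le_antisymm (orbit_subset_of_mem h) (orbit_subset_of_mem (mem_orbit_symm h))

/-! ### orbit sums -/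

noncomputable def mm (l : Pt n) : LaurentRing n := ∑ d ∈ orbit l, AddMonoidAlgebra.single d 1

lemma mm_apply (l d : Pt n) : mm l d = if d ∈ orbit l then 1 else 0 := by
  rw [mm, lsum_apply]
  simp only [lsingle_apply]
  rw [Finset.sum_ite_eq' (orbit l) d (fun _ => (1:ℂ))]

lemma mm_isInv (l : Pt n) : IsInv (mm l) := by
  apply isInv_of_forall
  intro σ ε d
  rw [mm_apply, mm_apply]
  congr 1
  simp only [eq_iff_iff]
  constructor
  · intro h
    have := act_mem_orbit σ⁻¹ (invε σ ε) h
    rwa [act_inv_act] at this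
  · exact act_mem_orbit σ ε

lemma mm_apply_self (l : Pt n) : mm l l = 1 := by
  rw [mm_apply, if_pos (self_mem_orbit l)]

/-! ### heights -/

def dominant (l : Pt n) : Prop := Antitone l ∧ ∀ i, 0 ≤ l i

def ht (d : Pt n) : ℤ := ∑ i, ((n : ℤ) - (i.1:ℤ)) * d i

def ps (k : ℕ) (d : Pt n) : ℤ := ∑ i : Fin n, if i.1 < k then d i else 0

lemma card_filter_le_range (a b : ℕ) :
    ((Finset.range b).filter (fun k => a ≤ k)).card = b - a := by
  have : (Finset.range b).filter (fun k => a ≤ k) = Finset.Ico a b := by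
    ext k; simp [Finset.mem_Ico, and_comm]
  rw [this, Nat.card_Ico]

lemma ht_eq_sum_ps (d : Pt n) : ht d = ∑ k ∈ Finset.range n, ps (k + 1) d := by
  unfold ht ps
  rw [Finset.sum_comm]
  apply Finset.sum_congr rfl
  intro i _
  rw [← Finset.sum_filter]
  have h1 : (Finset.range n).filter (fun k => i.1 < k + 1)
      = (Finset.range n).filter (fun k => i.1 ≤ k) := by
    ext k; simp [Nat.lt_succ_iff]
  rw [h1, Finset.sum_const, card_filter_le_range, nsmul_eq_mul]
  have : ((n - i.1 : ℕ) : ℤ) = (n : ℤ) - (i.1:ℤ) := by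
    have := i.2; omega
  rw [this]

lemma ps_mono {k k' : ℕ} (h : k' ≤ k) {l : Pt n} (hl : ∀ i, 0 ≤ l i) :
    ps k' l ≤ ps k l := by
  apply Finset.sum_le_sum
  intro i _
  by_cases h1 : i.1 < k'
  · rw [if_pos h1, if_pos (lt_of_lt_of_le h1 h)]
  · rw [if_neg h1]
    by_cases h2 : i.1 < k
    · rw [if_pos h2]; exact hl i
    · rw [if_neg h2]

lemma card_filter_lt_univ {k : ℕ} (hk : k ≤ n) :
    ((Finset.univ : Finset (Fin n)).filter (fun j => j.1 < k)).card = k := by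
  apply Finset.card_eq_of_bijective (fun i hi => ⟨i, lt_of_lt_of_le hi hk⟩)
  · intro a ha
    simp only [Finset.mem_filter] at ha
    exact ⟨a, ha.2, rfl⟩
  · intro i hi
    simp [hi]
  · intro i j hi hj hij
    exact Fin.mk.inj_iff.1 hij

lemma sum_le_ps {l : Pt n} (hl : dominant l) (T : Finset (Fin n)) :
    ∑ j ∈ T, l j ≤ ps T.card l := by
  classical
  set K := (Finset.univ : Finset (Fin n)).filter (fun j => j.1 < T.card) with hK
  have hps : ps T.card l = ∑ j ∈ K, l j := by
    rw [ps, ← Finset.sum_filter]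
  have hcardK : K.card = T.card := card_filter_lt_univ (by
    simpa using Finset.card_le_univ T)
  have hcards : (T \ K).card = (K \ T).card := by
    have h1 := Finset.card_inter_add_card_sdiff T K
    have h2 := Finset.card_inter_add_card_sdiff K T
    rw [Finset.inter_comm] at h2
    omega
  have key : ∑ j ∈ T \ K, l j ≤ ∑ j ∈ K \ T, l j := by
    have hcard' : Fintype.card ↥(T \ K) = Fintype.card ↥(K \ T) := by
      rw [Fintype.card_coe, Fintype.card_coe]; exact hcards
    let e := Fintype.equivOfCardEq hcard'
    rw [← Finset.sum_attach (T \ K) l, ← Finset.sum_attach (K \ T) l]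
    have h3 : ∑ x ∈ (K \ T).attach, l ↑x = ∑ x ∈ (T \ K).attach, l ↑(e x) := by
      rw [← Finset.univ_eq_attach, ← Finset.univ_eq_attach]
      exact (Equiv.sum_comp e (fun y : ↥(K \ T) => l ↑y)).symm
    rw [h3]
    apply Finset.sum_le_sum
    intro x _
    apply hl.1
    have hx : (x : Fin n) ∈ T \ K := x.2
    have hex : ((e x : ↥(K \ T)) : Fin n) ∈ K \ T := (e x).2
    simp only [hK, Finset.mem_sdiff, Finset.mem_filter] at hx hex
    have h1 : ¬ ((x : Fin n)).1 < T.card := fun hc => hx.2 ⟨Finset.mem_univ _, hc⟩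
    have h2 : ((e x : ↥(K \ T)) : Fin n).1 < T.card := hex.1.2
    exact Fin.le_def.2 (by omega)
  have hsplit1 : ∑ j ∈ T, l j = ∑ j ∈ T ∩ K, l j + ∑ j ∈ T \ K, l j :=
    (Finset.sum_inter_add_sum_sdiff T K l).symm
  have hsplit2 : ∑ j ∈ K, l j = ∑ j ∈ K ∩ T, l j + ∑ j ∈ K \ T, l j :=
    (Finset.sum_inter_add_sum_sdiff K T l).symm
  rw [hps, hsplit1, hsplit2, Finset.inter_comm]
  omega


lemma units_mul_le {u : ℤˣ} {x : ℤ} (hx : 0 ≤ x) : (u : ℤ) * x ≤ x := by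
  rcases Int.units_eq_one_or u with h | h <;> rw [h] <;> simp <;> linarith

lemma ps_act_le {l : Pt n} (hl : dominant l) (σ : Perm (Fin n)) (ε) (k : ℕ) :
    ps k (act σ ε l) ≤ ps k l := by
  classical
  have step1 : ps k (act σ ε l) ≤ ∑ i : Fin n, (if i.1 < k then l (σ⁻¹ i) else 0) := by
    apply Finset.sum_le_sum
    intro i _
    by_cases h1 : i.1 < k
    · rw [if_pos h1, if_pos h1]
      exact units_mul_le (hl.2 _)
    · rw [if_neg h1, if_neg h1]
  have step2 : ∑ i : Fin n, (if i.1 < k then l (σ⁻¹ i) else 0)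
      = ∑ j ∈ (Finset.univ.filter (fun i : Fin n => i.1 < k)).image (⇑σ⁻¹), l j := by
    rw [Finset.sum_image (fun a _ b _ h => σ⁻¹.injective h), ← Finset.sum_filter]
  have step3 : ∑ j ∈ (Finset.univ.filter (fun i : Fin n => i.1 < k)).image (⇑σ⁻¹), l j
      ≤ ps ((Finset.univ.filter (fun i : Fin n => i.1 < k)).image (⇑σ⁻¹)).card l :=
    sum_le_ps hl _
  have step4 : ((Finset.univ.filter (fun i : Fin n => i.1 < k)).image (⇑σ⁻¹)).card ≤ k := by
    rw [Finset.card_image_of_injective _ σ⁻¹.injective]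
    calc (Finset.univ.filter (fun i : Fin n => i.1 < k)).card
        ≤ (Finset.univ.filter (fun i : Fin n => i.1 < k) : Finset (Fin n)).card := le_refl _
      _ ≤ k := by
          by_cases hk : k ≤ n
          · rw [card_filter_lt_univ hk]
          · calc _ ≤ (Finset.univ : Finset (Fin n)).card := Finset.card_le_univ _
              _ = n := by simp
              _ ≤ k := by omega
  calc ps k (act σ ε l) ≤ _ := step1
    _ = _ := step2
    _ ≤ _ := step3
    _ ≤ ps k l := ps_mono step4 hl.2

lemma ps_succ (d : Pt n) {k : ℕ} (hk : k < n) :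
    ps (k + 1) d = ps k d + d ⟨k, hk⟩ := by
  classical
  have : ∑ i : Fin n, (if i = (⟨k, hk⟩ : Fin n) then d i else 0)
      = d ⟨k, hk⟩ := by
    rw [Finset.sum_ite_eq' Finset.univ (⟨k, hk⟩ : Fin n) d, if_pos (Finset.mem_univ _)]
  rw [ps, ps, ← this, ← Finset.sum_add_distrib]
  apply Finset.sum_congr rfl
  intro i _
  by_cases h1 : i.1 < k
  · rw [if_pos (by omega), if_pos h1, if_neg (by intro h; rw [h] at h1; simp at h1),
      add_zero]
  · by_cases h2 : i.1 = k
    · rw [if_pos (by omega), if_neg (by omega), if_pos (by exact Fin.ext h2), zero_add]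
    · rw [if_neg (by omega), if_neg (by omega), if_neg (by intro h; rw [h] at h2; simp at h2),
        add_zero]

lemma eq_of_ps_eq {a b : Pt n} (h : ∀ k, k ≤ n → ps k a = ps k b) : a = b := by
  funext i
  have h1 := h i.1 (le_of_lt i.2)
  have h2 := h (i.1 + 1) i.2
  rw [ps_succ a i.2, ps_succ b i.2] at h2
  have : a ⟨i.1, i.2⟩ = b ⟨i.1, i.2⟩ := by omega
  simpa using this

lemma ht_act_le {l : Pt n} (hl : dominant l) (σ : Perm (Fin n)) (ε) :
    ht (act σ ε l) ≤ ht l := by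
  rw [ht_eq_sum_ps, ht_eq_sum_ps]
  exact Finset.sum_le_sum fun k _ => ps_act_le hl σ ε (k + 1)

lemma act_eq_of_ht_eq {l : Pt n} (hl : dominant l) (σ : Perm (Fin n)) (ε)
    (h : ht (act σ ε l) = ht l) : act σ ε l = l := by
  rw [ht_eq_sum_ps, ht_eq_sum_ps] at h
  have hps := (Finset.sum_eq_sum_iff_of_le
    (fun k _ => ps_act_le hl σ ε (k + 1))).1 h
  apply eq_of_ps_eq
  intro k hk
  cases k with
  | zero => simp [ps]
  | succ m =>
    exact hps m (Finset.mem_range.2 (by omega))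

lemma ht_le_of_mem_orbit {l d : Pt n} (hl : dominant l) (h : d ∈ orbit l) : ht d ≤ ht l := by
  obtain ⟨σ, ε, rfl⟩ := mem_orbit.1 h
  exact ht_act_le hl σ ε

lemma eq_of_mem_orbit_ht {l d : Pt n} (hl : dominant l) (h : d ∈ orbit l)
    (hh : ht l ≤ ht d) : d = l := by
  obtain ⟨σ, ε, rfl⟩ := mem_orbit.1 h
  exact act_eq_of_ht_eq hl σ ε (le_antisymm (ht_act_le hl σ ε) hh)

lemma dominant_orbit_eq {l l' : Pt n} (hl : dominant l) (hl' : dominant l')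
    (h : l' ∈ orbit l) : l' = l :=
  eq_of_mem_orbit_ht hl h (ht_le_of_mem_orbit hl' (mem_orbit_symm h))

lemma ht_nonneg {l : Pt n} (hl : dominant l) : 0 ≤ ht l := by
  apply Finset.sum_nonneg
  intro i _
  have := i.2
  have := hl.2 i
  have : (0:ℤ) ≤ (n : ℤ) - (i.1:ℤ) := by omega
  positivity

lemma dominant_zero : dominant (0 : Pt n) := ⟨fun _ _ _ => le_refl _, fun _ => le_refl _⟩

lemma eq_zero_of_ht_nonpos {l : Pt n} (hl : dominant l) (h : ht l ≤ 0) : l = 0 := by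
  have hterm : ∀ i ∈ (Finset.univ : Finset (Fin n)), (0:ℤ) ≤ ((n : ℤ) - (i.1:ℤ)) * l i := by
    intro i _
    have h1 := i.2
    have h2 := hl.2 i
    have : (0:ℤ) ≤ (n : ℤ) - (i.1:ℤ) := by omega
    positivity
  have := (Finset.sum_eq_zero_iff_of_nonneg hterm).1 (le_antisymm h (ht_nonneg hl))
  funext i
  have h3 := this i (Finset.mem_univ i)
  have h1 := i.2
  have h2 := hl.2 i
  simp only [Pi.zero_apply]
  rcases mul_eq_zero.1 h3 with h4 | h4
  · omega
  · exact h4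

lemma ht_add (a b : Pt n) : ht (a + b) = ht a + ht b := by
  rw [ht, ht, ht, ← Finset.sum_add_distrib]
  exact Finset.sum_congr rfl fun i _ => by simp [mul_add]

/-! ### dominant representative -/

noncomputable def sortPerm (d : Pt n) : Perm (Fin n) := Tuple.sort (fun j => -|d j|)

noncomputable def domRep (d : Pt n) : Pt n := fun i => |d (sortPerm d i)|

lemma domRep_dominant (d : Pt n) : dominant (domRep d) := by
  constructor
  · intro i j hij
    have := Tuple.monotone_sort (fun j => -|d j|) hij
    simp only [Function.comp_apply] at this
    simp only [domRep, sortPerm]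
    omega
  · intro i
    exact abs_nonneg _

lemma domRep_mem_orbit (d : Pt n) : domRep d ∈ orbit d := by
  apply mem_orbit.2
  refine ⟨(sortPerm d)⁻¹, fun i => if d (sortPerm d i) < 0 then -1 else 1, ?_⟩
  funext i
  simp only [act, inv_inv, domRep]
  by_cases h : d (sortPerm d i) < 0
  · rw [if_pos h]
    simp [abs_of_neg h]
  · rw [if_neg h]
    simp [abs_of_nonneg (by omega : 0 ≤ d (sortPerm d i))]

lemma isInv_apply_eq_domRep {f : LaurentRing n} (hf : IsInv f) (d : Pt n) :
    f d = f (domRep d) := by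
  obtain ⟨σ, ε, h⟩ := mem_orbit.1 (domRep_mem_orbit d)
  rw [← h, isInv_apply_act hf]

lemma ht_le_domRep (d : Pt n) : ht d ≤ ht (domRep d) :=
  ht_le_of_mem_orbit (domRep_dominant d) (mem_orbit_symm (domRep_mem_orbit d))

lemma domRep_eq_self {l : Pt n} (hl : dominant l) : domRep l = l :=
  dominant_orbit_eq hl (domRep_dominant l) (domRep_mem_orbit l)

lemma domRep_eq_of_mem_orbit {l d : Pt n} (hl : dominant l) (h : d ∈ orbit l) :
    domRep d = l := by
  have h1 : domRep d ∈ orbit l := (orbit_eq_of_mem h) ▸ domRep_mem_orbit d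
  exact dominant_orbit_eq hl (domRep_dominant d) h1

lemma mem_orbit_iff_domRep {l d : Pt n} (hl : dominant l) :
    d ∈ orbit l ↔ domRep d = l := by
  constructor
  · exact domRep_eq_of_mem_orbit hl
  · intro h
    have := mem_orbit_symm (domRep_mem_orbit d)
    rwa [h] at this

/-! ### expansion in orbit sums -/

open scoped Classical in
noncomputable def domSupp (f : LaurentRing n) : Finset (Pt n) :=
  f.coeff.support.filter (fun l => dominant l)

lemma mem_domSupp {f : LaurentRing n} {l : Pt n} :
    l ∈ domSupp f ↔ f l ≠ 0 ∧ dominant l := by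
  classical
  simp [domSupp, Finsupp.mem_support_iff]

lemma expansion {f : LaurentRing n} (hf : IsInv f) :
    f = ∑ l ∈ domSupp f, f l • mm l := by
  ext d
  rw [lsum_apply]
  have hterm : ∀ l, (f l • mm l) d = f l * (if d ∈ orbit l then 1 else 0) := by
    intro l; rw [lsmul_apply, mm_apply, smul_eq_mul]
  simp only [hterm]
  by_cases hd : f d = 0
  · rw [hd]
    symm
    apply Finset.sum_eq_zero
    intro l hl
    rw [mem_domSupp] at hl
    by_cases hmem : d ∈ orbit l
    · obtain ⟨σ, ε, rfl⟩ := mem_orbit.1 hmem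
      rw [isInv_apply_act hf] at hd
      exact absurd hd hl.1
    · rw [if_neg hmem, mul_zero]
  · have hdom : domRep d ∈ domSupp f :=
      mem_domSupp.2 ⟨by rw [← isInv_apply_eq_domRep hf]; exact hd, domRep_dominant d⟩
    rw [Finset.sum_eq_single_of_mem (domRep d) hdom]
    · rw [if_pos (mem_orbit_symm (domRep_mem_orbit d)), mul_one,
        ← isInv_apply_eq_domRep hf]
    · intro l hl hne
      rw [mem_domSupp] at hl
      rw [if_neg, mul_zero]
      intro hmem
      exact hne (domRep_eq_of_mem_orbit hl.2 hmem).symm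

/-! ### products of orbit sums -/

lemma dominant_add {a b : Pt n} (ha : dominant a) (hb : dominant b) : dominant (a + b) :=
  ⟨fun i j hij => add_le_add (ha.1 hij) (hb.1 hij),
    fun i => add_nonneg (ha.2 i) (hb.2 i)⟩

lemma pair_eq {α β x y : Pt n} (hα : dominant α) (hβ : dominant β)
    (hx : x ∈ orbit α) (hy : y ∈ orbit β) (h : ht α + ht β ≤ ht (x + y)) :
    x = α ∧ y = β := by
  rw [ht_add] at h
  have h1 := ht_le_of_mem_orbit hα hx
  have h2 := ht_le_of_mem_orbit hβ hy
  exact ⟨eq_of_mem_orbit_ht hα hx (by omega), eq_of_mem_orbit_ht hβ hy (by omega)⟩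

lemma mm_mul_mm (a b : Pt n) :
    mm a * mm b = ∑ x ∈ orbit a, ∑ y ∈ orbit b, AddMonoidAlgebra.single (x + y) (1:ℂ) := by
  rw [mm, mm, Finset.sum_mul_sum]
  apply Finset.sum_congr rfl
  intro x _
  apply Finset.sum_congr rfl
  intro y _
  rw [AddMonoidAlgebra.single_mul_single, one_mul]

lemma mm_mul_apply_ne {α β : Pt n} (hα : dominant α) (hβ : dominant β) {d : Pt n}
    (hht : ht (α + β) ≤ ht d) (hne : d ≠ α + β) : (mm α * mm β) d = 0 := by
  classical
  rw [mm_mul_mm, lsum_apply]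
  apply Finset.sum_eq_zero
  intro x hx
  rw [lsum_apply]
  apply Finset.sum_eq_zero
  intro y hy
  rw [lsingle_apply, if_neg]
  intro hxy
  rw [ht_add] at hht
  obtain ⟨rfl, rfl⟩ := pair_eq hα hβ hx hy (by rw [hxy]; omega)
  exact hne hxy.symm

lemma mm_mul_apply_top {α β : Pt n} (hα : dominant α) (hβ : dominant β) :
    (mm α * mm β) (α + β) = 1 := by
  classical
  rw [mm_mul_mm, lsum_apply]
  rw [Finset.sum_eq_single_of_mem α (self_mem_orbit α)]
  · rw [lsum_apply, Finset.sum_eq_single_of_mem β (self_mem_orbit β)]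
    · rw [lsingle_apply, if_pos rfl]
    · intro y hy hne
      rw [lsingle_apply, if_neg]
      intro hxy
      have := (pair_eq hα hβ (self_mem_orbit α) hy (by rw [hxy, ht_add])).2
      exact hne this
  · intro x hx hne
    rw [lsum_apply]
    apply Finset.sum_eq_zero
    intro y hy
    rw [lsingle_apply, if_neg]
    intro hxy
    exact hne (pair_eq hα hβ hx hy (by rw [hxy, ht_add])).1

lemma mm_bound (α : Pt n) (hα : dominant α) :
    ∀ d : Pt n, mm α d ≠ 0 → ht d ≤ ht α := by
  intro d hd
  rw [mm_apply] at hd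
  by_cases h : d ∈ orbit α
  · exact ht_le_of_mem_orbit hα h
  · rw [if_neg h] at hd; exact absurd rfl hd

lemma mul_bound {f g : LaurentRing n} {A B : ℤ}
    (hf : ∀ d : Pt n, f d ≠ 0 → ht d ≤ A) (hg : ∀ d : Pt n, g d ≠ 0 → ht d < B) :
    ∀ d : Pt n, (f * g) d ≠ 0 → ht d < A + B := by
  classical
  intro d hd
  have hmem : d ∈ (f * g).coeff.support := Finsupp.mem_support_iff.2 hd
  have := AddMonoidAlgebra.support_coeff_mul_subset f g hmem
  rw [Finset.mem_add] at this
  obtain ⟨x, hx, y, hy, rfl⟩ := this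
  rw [ht_add]
  have h1 := hf x (Finsupp.mem_support_iff.1 hx)
  have h2 := hg y (Finsupp.mem_support_iff.1 hy)
  omega

lemma mm_mul_decomp {α β : Pt n} (hα : dominant α) (hβ : dominant β) :
    ∃ r : LaurentRing n, mm α * mm β = mm (α + β) + r ∧ IsInv r ∧
      ∀ d : Pt n, ht (α + β) ≤ ht d → r d = 0 := by
  refine ⟨mm α * mm β - mm (α + β), by ring, ((mm_isInv α).mul (mm_isInv β)).sub (mm_isInv _), ?_⟩
  intro d hd
  rw [lsub_apply]
  by_cases h : d = α + β
  · subst h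
    rw [mm_mul_apply_top hα hβ, mm_apply_self, sub_self]
  · rw [mm_mul_apply_ne hα hβ hd h, mm_apply, if_neg, sub_self]
    intro hmem
    exact h (eq_of_mem_orbit_ht (dominant_add hα hβ) hmem hd)

lemma orbit_zero : orbit (0 : Pt n) = {0} := by
  ext d
  rw [mem_orbit]
  constructor
  · rintro ⟨σ, ε, rfl⟩
    rw [act_zero]
    exact Finset.mem_singleton_self 0
  · intro h
    rw [Finset.mem_singleton] at h
    exact ⟨1, fun _ => 1, by rw [act_zero, h]⟩

lemma mm_zero : mm (0 : Pt n) = 1 := by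
  rw [mm, orbit_zero]
  rw [Finset.sum_singleton (f := fun d : Pt n => (AddMonoidAlgebra.single d 1 : LaurentRing n)) (a := (0 : Pt n))]
  exact (AddMonoidAlgebra.one_def).symm

lemma dominant_multiset_sum (M : Multiset (Pt n)) (hM : ∀ a ∈ M, dominant a) :
    dominant M.sum := by
  induction M using Multiset.induction with
  | empty => rw [Multiset.sum_zero]; exact dominant_zero
  | cons a M ih =>
    rw [Multiset.sum_cons]
    exact dominant_add (hM a (Multiset.mem_cons_self a M))
      (ih fun b hb => hM b (Multiset.mem_cons_of_mem hb))

lemma mm_multiset_prod (M : Multiset (Pt n)) (hM : ∀ a ∈ M, dominant a) :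
    ∃ r : LaurentRing n, (M.map mm).prod = mm M.sum + r ∧ IsInv r ∧
      ∀ d : Pt n, ht M.sum ≤ ht d → r d = 0 := by
  induction M using Multiset.induction with
  | empty =>
    refine ⟨0, ?_, IsInv.zero, fun d _ => rfl⟩
    simp [mm_zero]
  | cons a M ih =>
    have ha : dominant a := hM a (Multiset.mem_cons_self a M)
    have hM' : ∀ b ∈ M, dominant b := fun b hb => hM b (Multiset.mem_cons_of_mem hb)
    obtain ⟨r, hr, hrI, hrB⟩ := ih hM'
    have hMs : dominant M.sum := dominant_multiset_sum M hM'
    obtain ⟨r2, hr2, hr2I, hr2B⟩ := mm_mul_decomp ha hMs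
    refine ⟨r2 + mm a * r, ?_, hr2I.add ((mm_isInv a).mul hrI), ?_⟩
    · rw [Multiset.map_cons, Multiset.prod_cons, hr, Multiset.sum_cons, mul_add, hr2]
      ring
    · intro d hd
      rw [Multiset.sum_cons] at hd
      rw [ladd_apply, hr2B d hd, zero_add]
      by_contra hne
      have hb := mul_bound (mm_bound a ha)
        (fun e he => not_le.mp (fun hc => he (hrB e hc))) d hne
      rw [ht_add] at hd
      omega

/-! ### the generators z_i and elementary symmetric functions -/

def zSet (n : ℕ) : Set (LaurentRing n) :=
  {g | ∃ i : Fin n, g = lmono n (Pi.single i 1) + lmono n (Pi.single i (-1))}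

noncomputable def zz (i : Fin n) : LaurentRing n :=
  lmono n (Pi.single i 1) + lmono n (Pi.single i (-1))

lemma zz_mem_zSet (i : Fin n) : zz i ∈ zSet n := ⟨i, rfl⟩

def sgnvec (S T : Finset (Fin n)) : Pt n :=
  fun i => if i ∈ T then 1 else if i ∈ S then -1 else 0

lemma sgnvec_insert_pos {S T : Finset (Fin n)} {a : Fin n} (ha : a ∉ S) (hT : T ⊆ S) :
    sgnvec (insert a S) (insert a T) = Pi.single a 1 + sgnvec S T := by
  classical
  funext i
  by_cases hia : i = a
  · subst hia
    have h1 : i ∉ T := fun h => ha (hT h)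
    simp [sgnvec, h1, ha]
  · simp [sgnvec, hia, Pi.single_eq_of_ne hia, Finset.mem_insert]

lemma sgnvec_insert_neg {S T : Finset (Fin n)} {a : Fin n} (ha : a ∉ S) (hT : T ⊆ S) :
    sgnvec (insert a S) T = Pi.single a (-1) + sgnvec S T := by
  classical
  funext i
  by_cases hia : i = a
  · subst hia
    have h1 : i ∉ T := fun h => ha (hT h)
    simp [sgnvec, h1, ha, Finset.mem_insert]
  · simp [sgnvec, hia, Pi.single_eq_of_ne hia, Finset.mem_insert]

lemma prod_zz (S : Finset (Fin n)) :
    ∏ i ∈ S, zz i = ∑ T ∈ S.powerset, AddMonoidAlgebra.single (sgnvec S T) (1:ℂ) := by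
  classical
  induction S using Finset.induction_on with
  | empty =>
    rw [Finset.prod_empty, Finset.powerset_empty, Finset.sum_singleton]
    have : sgnvec (∅ : Finset (Fin n)) ∅ = 0 := by funext i; simp [sgnvec]
    rw [this]
    exact AddMonoidAlgebra.one_def.symm
  | @insert a S ha ih =>
    have hinj : ∀ T1 ∈ S.powerset, ∀ T2 ∈ S.powerset, insert a T1 = insert a T2 → T1 = T2 := by
      intro T1 h1 T2 h2 h
      rw [Finset.mem_powerset] at h1 h2
      ext x
      by_cases hxa : x = a
      · subst hxa
        constructor
        · intro hx; exact absurd (h1 hx) ha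
        · intro hx; exact absurd (h2 hx) ha
      · constructor
        · intro hx
          have : x ∈ insert a T2 := h ▸ Finset.mem_insert_of_mem hx
          rcases Finset.mem_insert.1 this with h' | h'
          · exact absurd h' hxa
          · exact h'
        · intro hx
          have : x ∈ insert a T1 := h.symm ▸ Finset.mem_insert_of_mem hx
          rcases Finset.mem_insert.1 this with h' | h'
          · exact absurd h' hxa
          · exact h'
    have hdisj : Disjoint S.powerset (S.powerset.image (insert a)) := by
      rw [Finset.disjoint_left]
      intro T hT hT2
      obtain ⟨T', hT', rfl⟩ := Finset.mem_image.1 hT2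
      rw [Finset.mem_powerset] at hT
      exact ha (hT (Finset.mem_insert_self a T'))
    rw [Finset.prod_insert ha, ih, Finset.powerset_insert, Finset.sum_union hdisj]
    have himg : ∑ T ∈ S.powerset.image (insert a), AddMonoidAlgebra.single (sgnvec (insert a S) T) (1:ℂ)
        = ∑ T ∈ S.powerset, AddMonoidAlgebra.single (sgnvec (insert a S) (insert a T)) (1:ℂ) :=
      Finset.sum_image hinj
    rw [himg, zz, add_mul, Finset.mul_sum, Finset.mul_sum]
    rw [add_comm (∑ T ∈ S.powerset, AddMonoidAlgebra.single (sgnvec (insert a S) T) (1:ℂ)) _]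
    congr 1
    · apply Finset.sum_congr rfl
      intro T hT
      rw [lmono, AddMonoidAlgebra.ofCoeff_single, AddMonoidAlgebra.single_mul_single, one_mul,
        sgnvec_insert_pos ha (Finset.mem_powerset.1 hT)]
    · apply Finset.sum_congr rfl
      intro T hT
      rw [lmono, AddMonoidAlgebra.ofCoeff_single, AddMonoidAlgebra.single_mul_single, one_mul,
        sgnvec_insert_neg ha (Finset.mem_powerset.1 hT)]

/-! ### the fundamental weights -/

def omeg (k : ℕ) : Pt n := fun i => if i.1 < k then (1:ℤ) else 0

lemma dominant_omeg (k : ℕ) : dominant (omeg (n := n) k) := by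
  constructor
  · intro i j hij
    simp only [omeg]
    have h := Fin.le_def.1 hij
    by_cases h1 : j.1 < k
    · rw [if_pos h1, if_pos (by omega)]
    · rw [if_neg h1]
      split <;> omega
  · intro i
    simp only [omeg]
    split <;> omega

lemma sum_ite_lt_univ {m : ℕ} (hm : m ≤ n) :
    ∑ j : Fin n, (if j.1 < m then (1:ℤ) else 0) = m := by
  rw [← Finset.sum_filter, Finset.sum_const, card_filter_lt_univ hm]
  simp

lemma eq_omeg {g : Pt n} (hg : dominant g) (hle : ∀ i, g i ≤ 1) {k : ℕ} (hk : k ≤ n)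
    (hsum : ∑ i, g i = (k:ℤ)) : g = omeg k := by
  funext i
  by_cases hik : i.1 < k
  · simp only [omeg, if_pos hik]
    by_contra hne
    have hgi : g i ≤ 0 := by
      have h1 := hle i
      omega
    have hbound : ∀ j : Fin n, g j ≤ (if j.1 < i.1 then (1:ℤ) else 0) := by
      intro j
      by_cases hj : j.1 < i.1
      · rw [if_pos hj]; exact hle j
      · rw [if_neg hj]
        calc g j ≤ g i := hg.1 (Fin.le_def.2 (by omega))
          _ ≤ 0 := hgi
    have hs := Finset.sum_le_sum (fun j (_ : j ∈ Finset.univ) => hbound j)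
    rw [hsum, sum_ite_lt_univ (by omega : i.1 ≤ n)] at hs
    have := i.2
    omega
  · simp only [omeg, if_neg hik]
    by_contra hne
    have hgi : 1 ≤ g i := by
      have h1 := hg.2 i
      omega
    have hbound : ∀ j : Fin n, (if j.1 < i.1 + 1 then (1:ℤ) else 0) ≤ g j := by
      intro j
      by_cases hj : j.1 < i.1 + 1
      · rw [if_pos hj]
        calc (1:ℤ) ≤ g i := hgi
          _ ≤ g j := hg.1 (Fin.le_def.2 (by omega))
      · rw [if_neg hj]; exact hg.2 j
    have hs := Finset.sum_le_sum (fun j (_ : j ∈ Finset.univ) => hbound j)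
    rw [hsum, sum_ite_lt_univ (by omega : i.1 + 1 ≤ n)] at hs
    omega

noncomputable def cnt (v : Pt n) : ℕ := (Finset.univ.filter (fun i => v i ≠ 0)).card

lemma cnt_act (σ : Equiv.Perm (Fin n)) (ε) (d : Pt n) : cnt (act σ ε d) = cnt d := by
  classical
  have himg : Finset.univ.filter (fun i => act σ ε d i ≠ 0)
      = (Finset.univ.filter (fun i => d i ≠ 0)).image σ := by
    ext i
    simp only [Finset.mem_filter, Finset.mem_univ, true_and, Finset.mem_image]; simp only [act]
    constructor
    · intro h
      refine ⟨σ⁻¹ i, ?_, by simp⟩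
      intro hc
      rw [hc, mul_zero] at h
      exact h rfl
    · rintro ⟨j, hj, rfl⟩
      rw [show σ⁻¹ (σ j) = j from σ.symm_apply_apply j]
      exact mul_ne_zero (Units.ne_zero _) hj
  rw [cnt, himg, Finset.card_image_of_injective _ σ.injective, cnt]

lemma cnt_omeg {k : ℕ} (hk : k ≤ n) : cnt (omeg (n := n) k) = k := by
  classical
  have : Finset.univ.filter (fun i : Fin n => omeg k i ≠ 0)
      = Finset.univ.filter (fun i : Fin n => i.1 < k) := by
    ext i
    simp only [Finset.mem_filter]; simp only [omeg]
    constructor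
    · intro ⟨h1, h2⟩
      refine ⟨h1, ?_⟩
      by_contra hc
      rw [if_neg hc] at h2
      exact h2 rfl
    · intro ⟨h1, h2⟩
      rw [if_pos h2]
      exact ⟨h1, one_ne_zero⟩
  rw [cnt, this, card_filter_lt_univ hk]

lemma abs_omeg_le (k : ℕ) (i : Fin n) : |omeg (n := n) k i| ≤ 1 := by
  simp only [omeg]
  split <;> simp

lemma abs_act_le {d : Pt n} (h : ∀ i, |d i| ≤ 1) (σ : Equiv.Perm (Fin n)) (ε) (i : Fin n) :
    |act σ ε d i| ≤ 1 := by
  rw [act, abs_mul]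
  rcases Int.units_eq_one_or (ε i) with h' | h' <;>
    · rw [h']
      simpa using h (σ⁻¹ i)

lemma int_abs_cases {x : ℤ} (h : |x| ≤ 1) : x = -1 ∨ x = 0 ∨ x = 1 := by
  rcases le_or_gt 0 x with h' | h'
  · rw [abs_of_nonneg h'] at h; omega
  · rw [abs_of_neg h'] at h; omega

lemma sum_domRep (v : Pt n) : ∑ i, domRep v i = ∑ i, |v i| := by
  rw [show (fun i => domRep v i) = (fun j => |v j|) ∘ (sortPerm v) from rfl]
  exact Equiv.sum_comp (sortPerm v) (fun j => |v j|)

lemma domRep_eq_omeg {v : Pt n} {k : ℕ} (hk : k ≤ n) (h1 : ∀ i, |v i| ≤ 1)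
    (h2 : cnt v = k) : domRep v = omeg k := by
  classical
  apply eq_omeg (domRep_dominant v) (fun i => by
    have h := h1 (sortPerm v i)
    simp only [domRep]
    rcases int_abs_cases h with h' | h' | h' <;> simp [h']) hk
  rw [sum_domRep]
  have : ∀ i : Fin n, |v i| = if v i ≠ 0 then (1:ℤ) else 0 := by
    intro i
    have := h1 i
    by_cases h : v i = 0
    · simp [h]
    · rw [if_pos h]
      rcases int_abs_cases this with h' | h' | h'
      · rw [h']; simp
      · exact absurd h' h
      · rw [h']; simp
  rw [Finset.sum_congr rfl (fun i _ => this i), ← Finset.sum_filter, Finset.sum_const, ← h2,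
    cnt]
  simp

lemma mem_orbit_omeg {v : Pt n} {k : ℕ} (hk : k ≤ n) :
    v ∈ orbit (omeg k) ↔ (∀ i, |v i| ≤ 1) ∧ cnt v = k := by
  constructor
  · intro h
    obtain ⟨σ, ε, rfl⟩ := mem_orbit.1 h
    exact ⟨abs_act_le (abs_omeg_le k) σ ε, by rw [cnt_act, cnt_omeg hk]⟩
  · intro ⟨h1, h2⟩
    rw [mem_orbit_iff_domRep (dominant_omeg k)]
    exact domRep_eq_omeg hk h1 h2

lemma sgnvec_supp {S T : Finset (Fin n)} (hT : T ⊆ S) :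
    Finset.univ.filter (fun i => sgnvec S T i ≠ 0) = S := by
  classical
  ext i
  simp only [Finset.mem_filter, Finset.mem_univ, true_and]; simp only [sgnvec]
  by_cases h1 : i ∈ T
  · simp [h1, hT h1]
  · by_cases h2 : i ∈ S <;> simp [h1, h2]

lemma sgnvec_pos {S T : Finset (Fin n)} (hT : T ⊆ S) :
    Finset.univ.filter (fun i => sgnvec S T i = 1) = T := by
  classical
  ext i
  simp only [Finset.mem_filter, Finset.mem_univ, true_and, sgnvec]
  by_cases h1 : i ∈ T
  · simp [h1]
  · by_cases h2 : i ∈ S <;> simp [h1, h2]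

lemma abs_sgnvec_le (S T : Finset (Fin n)) (i : Fin n) : |sgnvec S T i| ≤ 1 := by
  simp only [sgnvec]
  split
  · simp
  · split <;> simp

lemma esymm_eq_mm_omeg {k : ℕ} (hk : k ≤ n) :
    ∑ S ∈ Finset.powersetCard k (Finset.univ : Finset (Fin n)), ∏ i ∈ S, zz i
      = mm (omeg k) := by
  classical
  rw [Finset.sum_congr rfl (fun S _ => prod_zz S), mm, Finset.sum_sigma']
  apply Finset.sum_nbij' (i := fun p : Σ _ : Finset (Fin n), Finset (Fin n) => sgnvec p.1 p.2)
    (j := fun v : Pt n => ⟨Finset.univ.filter (fun i => v i ≠ 0),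
      Finset.univ.filter (fun i => v i = 1)⟩)
  · intro p hp
    rw [Finset.mem_sigma] at hp
    obtain ⟨hp1, hp2⟩ := hp
    rw [Finset.mem_powersetCard] at hp1
    rw [Finset.mem_powerset] at hp2
    rw [mem_orbit_omeg hk]
    refine ⟨abs_sgnvec_le p.1 p.2, ?_⟩
    rw [cnt, sgnvec_supp hp2, hp1.2]
  · intro v hv
    rw [mem_orbit_omeg hk] at hv
    rw [Finset.mem_sigma, Finset.mem_powersetCard, Finset.mem_powerset]
    refine ⟨⟨Finset.subset_univ _, hv.2⟩, ?_⟩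
    intro i hi
    rw [Finset.mem_filter] at hi ⊢
    refine ⟨hi.1, ?_⟩
    rw [hi.2]
    exact one_ne_zero
  · intro p hp
    rw [Finset.mem_sigma] at hp
    obtain ⟨hp1, hp2⟩ := hp
    rw [Finset.mem_powerset] at hp2
    have h1 := sgnvec_supp hp2
    have h2 := sgnvec_pos hp2
    exact Sigma.ext h1 (heq_of_eq h2)
  · intro v hv
    rw [mem_orbit_omeg hk] at hv
    funext i
    have h1 := hv.1 i
    simp only [sgnvec, Finset.mem_filter, Finset.mem_univ, true_and]
    by_cases hv1 : v i = 1
    · rw [if_pos hv1, hv1]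
    · rw [if_neg hv1]
      by_cases hv0 : v i = 0
      · rw [if_neg (by rw [hv0]; simp), hv0]
      · rw [if_pos hv0]
        rcases int_abs_cases h1 with h' | h' | h'
        · omega
        · exact absurd h' hv0
        · exact absurd h' hv1
  · intro p hp
    rfl

/-! ### decomposition of dominant weights into fundamental weights -/

def lext (l : Pt n) : ℕ → ℤ := fun k => if h : k < n then l ⟨k, h⟩ else 0

lemma lext_anti {l : Pt n} (hl : dominant l) {a b : ℕ} (h : a ≤ b) :
    lext l b ≤ lext l a := by
  unfold lext
  by_cases hb : b < n
  · rw [dif_pos hb, dif_pos (by omega : a < n)]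
    exact hl.1 (Fin.le_def.2 (by simpa using h))
  · rw [dif_neg hb]
    by_cases ha : a < n
    · rw [dif_pos ha]; exact hl.2 _
    · rw [dif_neg ha]

lemma sum_Ico_tele (g : ℕ → ℤ) {a b : ℕ} (h : a ≤ b) :
    ∑ i ∈ Finset.Ico a b, (g i - g (i + 1)) = g a - g b := by
  rw [Finset.sum_Ico_eq_sub _ h, Finset.sum_range_sub' g, Finset.sum_range_sub' g]
  ring

lemma exists_multiset {l : Pt n} (hl : dominant l) :
    ∃ M : Multiset (Pt n), (∀ a ∈ M, ∃ k : ℕ, k ≤ n ∧ a = omeg k) ∧ M.sum = l := by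
  classical
  refine ⟨(Finset.range n).val.bind
    (fun i => Multiset.replicate (lext l i - lext l (i + 1)).toNat (omeg (i + 1))), ?_, ?_⟩
  · intro a ha
    rw [Multiset.mem_bind] at ha
    obtain ⟨i, hi, ha⟩ := ha
    rw [Multiset.eq_of_mem_replicate ha]
    have hi' : i ∈ Finset.range n := hi
    rw [Finset.mem_range] at hi'
    exact ⟨i + 1, by omega, rfl⟩
  · rw [Multiset.sum_bind]
    have hrepl : ∀ i : ℕ, (Multiset.replicate (lext l i - lext l (i + 1)).toNat
        (omeg (n := n) (i + 1))).sum = (lext l i - lext l (i + 1)).toNat • omeg (i + 1) :=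
      fun i => Multiset.sum_replicate _ _
    rw [Multiset.map_congr rfl (fun i _ => hrepl i)]
    have h3 : (Multiset.map (fun i => (lext l i - lext l (i + 1)).toNat • omeg (n := n) (i + 1))
        (Finset.range n).val).sum
        = ∑ i ∈ Finset.range n, (lext l i - lext l (i + 1)).toNat • omeg (i + 1) := rfl
    rw [h3]
    funext j
    rw [Finset.sum_apply]
    have h4 : ∀ i ∈ Finset.range n,
        ((lext l i - lext l (i + 1)).toNat • omeg (n := n) (i + 1)) j
        = if j.1 ≤ i then (lext l i - lext l (i + 1)) else 0 := by
      intro i _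
      rw [Pi.smul_apply]
      simp only [omeg, nsmul_eq_mul]
      by_cases hj : j.1 < i + 1
      · rw [if_pos hj, if_pos (by omega : j.1 ≤ i), mul_one,
          Int.toNat_of_nonneg (sub_nonneg.2 (lext_anti hl (by omega)))]
      · rw [if_neg hj, if_neg (by omega), mul_zero]
    rw [Finset.sum_congr rfl h4, ← Finset.sum_filter]
    have h5 : (Finset.range n).filter (fun i => j.1 ≤ i) = Finset.Ico j.1 n := by
      ext i; simp [Finset.mem_Ico, and_comm]
    rw [h5, sum_Ico_tele (fun i => lext l i) (by omega : j.1 ≤ n)]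
    have h6 : lext l n = 0 := by rw [lext, dif_neg (by omega)]
    have h7 : lext l j.1 = l j := by rw [lext, dif_pos j.2]
    rw [h6, h7, sub_zero]

/-! ### orbit sums lie in the adjoin of the z's -/

lemma mm_mem_adjoin_aux : ∀ N : ℕ, ∀ l : Pt n, dominant l → (ht l).toNat ≤ N →
    mm l ∈ Algebra.adjoin ℂ (zSet n) := by
  intro N
  induction N using Nat.strong_induction_on with
  | _ N ih =>
    intro l hl hN
    obtain ⟨M, hM1, hMsum⟩ := exists_multiset hl
    obtain ⟨r, hr, hrI, hrB⟩ := mm_multiset_prod M (fun a ha => by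
      obtain ⟨k, hk, rfl⟩ := hM1 a ha; exact dominant_omeg k)
    rw [hMsum] at hr hrB
    have hprod : (M.map mm).prod ∈ Algebra.adjoin ℂ (zSet n) := by
      apply Subalgebra.multiset_prod_mem
      intro x hx
      rw [Multiset.mem_map] at hx
      obtain ⟨a, ha, rfl⟩ := hx
      obtain ⟨k, hk, rfl⟩ := hM1 a ha
      rw [← esymm_eq_mm_omeg hk]
      apply Subalgebra.sum_mem
      intro S _
      apply Subalgebra.prod_mem
      intro i _
      exact Algebra.subset_adjoin (zz_mem_zSet i)
    have hrmem : r ∈ Algebra.adjoin ℂ (zSet n) := by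
      rw [expansion hrI]
      apply Subalgebra.sum_mem
      intro γ hγ
      rw [mem_domSupp] at hγ
      have hγht : ht γ < ht l := by
        by_contra hc
        exact hγ.1 (hrB γ (le_of_not_gt hc))
      have h0 : 0 ≤ ht γ := ht_nonneg hγ.2
      have h1 : 0 ≤ ht l := ht_nonneg hl
      have h2 : (ht γ).toNat < N := by omega
      exact Subalgebra.smul_mem _ (ih (ht γ).toNat h2 γ hγ.2 (le_refl _)) _
    have heq : mm l = (M.map mm).prod - r := by rw [hr]; ring
    rw [heq]
    exact Subalgebra.sub_mem _ hprod hrmem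

lemma mm_mem_adjoin {l : Pt n} (hl : dominant l) : mm l ∈ Algebra.adjoin ℂ (zSet n) :=
  mm_mem_adjoin_aux (ht l).toNat l hl (le_refl _)

/-! ### part 1 -/

lemma isInv_iff (f : LaurentRing n) :
    IsInv f ↔ f ∈ Algebra.adjoin ℂ (zSet n) ∧
      ∀ σ : Equiv.Perm (Fin n), wAct n σ (fun _ => 1) f = f := by
  constructor
  · intro hf
    refine ⟨?_, fun σ => hf σ _⟩
    rw [expansion hf]
    exact Subalgebra.sum_mem _
      (fun l hl => Subalgebra.smul_mem _ (mm_mem_adjoin (mem_domSupp.1 hl).2) _)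
  · rintro ⟨hadj, hsym⟩
    have hflip : ∀ (ε' : Fin n → ℤˣ), wAct n 1 ε' f = f := by
      intro ε'
      refine Algebra.adjoin_induction ?_ ?_ ?_ ?_ hadj
      · intro g hg
        obtain ⟨i, rfl⟩ := hg
        have hact : ∀ c : ℤ, act (1 : Equiv.Perm (Fin n)) ε' (Pi.single i c)
            = Pi.single i ((ε' i : ℤ) * c) := by
          intro c
          funext j
          have h1 : ((1 : Equiv.Perm (Fin n))⁻¹ j) = j := rfl
          by_cases hj : j = i
          · subst hj
            simp only [act, h1]
            rw [Pi.single_eq_same,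
              Pi.single_eq_same]
          · simp only [act, h1]
            rw [Pi.single_eq_of_ne hj,
              Pi.single_eq_of_ne hj, mul_zero]
        rw [lmono, lmono, AddMonoidAlgebra.ofCoeff_single, AddMonoidAlgebra.ofCoeff_single, wAct_eq, map_add, ← wAct_eq, ← wAct_eq, wAct_single, wAct_single,
          hact, hact]
        rcases Int.units_eq_one_or (ε' i) with h | h <;> rw [h]
        · norm_num
        · norm_num [add_comm]
      · intro c
        rw [wAct_eq, AlgHom.commutes]
      · intro x y _ _ hx hy
        rw [wAct_eq, map_add, ← wAct_eq, ← wAct_eq, hx, hy]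
      · intro x y _ _ hx hy
        rw [wAct_eq, map_mul, ← wAct_eq, ← wAct_eq, hx, hy]
    intro σ ε
    have hcomp := wAct_wAct σ 1 (fun _ => (1:ℤˣ)) (fun i => ε (σ i)) f
    have h1 : (σ * 1 : Equiv.Perm (Fin n)) = σ := mul_one σ
    have h2 : (fun i => (1:ℤˣ) * ε (σ (σ⁻¹ i))) = ε := by
      funext i
      rw [one_mul, show σ (σ⁻¹ i) = i from σ.apply_symm_apply i]
    rw [h1, h2] at hcomp
    rw [← hcomp, hflip, hsym]

/-! ### the doubling map Φ -/

def dblv (d : Pt n) : Pt n := fun i => 2 * d i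

def dblHom : Pt n →+ Pt n :=
  ⟨⟨dblv, by funext i; simp [dblv]⟩, by intro a b; funext i; simp [dblv]; ring⟩

noncomputable def Phi : LaurentRing n →ₐ[ℂ] LaurentRing n :=
  AddMonoidAlgebra.mapDomainAlgHom ℂ ℂ (dblHom (n := n))

lemma Phi_apply (f : LaurentRing n) : Phi f = AddMonoidAlgebra.ofCoeff (Finsupp.mapDomain dblv f.coeff) := rfl

lemma dblv_injective : Function.Injective (dblv (n := n)) := by
  intro a b h
  funext i
  have := congrFun h i
  simp only [dblv] at this
  omega

lemma Phi_injective : Function.Injective (Phi (n := n)) := by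
  intro a b h
  exact AddMonoidAlgebra.mapDomain_injective dblv_injective h

lemma Phi_single (d : Pt n) (c : ℂ) :
    Phi (AddMonoidAlgebra.single d c) = AddMonoidAlgebra.single (dblv d) c :=
  congrArg AddMonoidAlgebra.ofCoeff Finsupp.mapDomain_single

lemma act_dblv (σ : Equiv.Perm (Fin n)) (ε) (d : Pt n) :
    act σ ε (dblv d) = dblv (act σ ε d) := by
  funext i
  simp [act, dblv]
  ring

lemma Phi_wAct (σ : Equiv.Perm (Fin n)) (ε) (f : LaurentRing n) :
    wAct n σ ε (Phi f) = Phi (wAct n σ ε f) := by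
  show AddMonoidAlgebra.ofCoeff (Finsupp.mapDomain _ (Finsupp.mapDomain dblv f.coeff)) = AddMonoidAlgebra.ofCoeff (Finsupp.mapDomain dblv (Finsupp.mapDomain _ f.coeff))
  rw [← Finsupp.mapDomain_comp, ← Finsupp.mapDomain_comp]
  congr 2
  funext d
  exact act_dblv σ ε d

lemma Phi_isInv {f : LaurentRing n} (hf : IsInv f) : IsInv (Phi f) := by
  intro σ ε
  rw [Phi_wAct, hf σ ε]

lemma dominant_dblv {μ : Pt n} (hμ : dominant μ) : dominant (dblv μ) :=
  ⟨fun i j hij => by simp only [dblv]; have := hμ.1 hij; omega,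
   fun i => by simp only [dblv]; have := hμ.2 i; omega⟩

lemma orbit_dblv (μ : Pt n) : orbit (dblv μ) = (orbit μ).image dblv := by
  ext d
  rw [Finset.mem_image]
  constructor
  · intro h
    obtain ⟨σ, ε, rfl⟩ := mem_orbit.1 h
    exact ⟨act σ ε μ, mem_orbit.2 ⟨σ, ε, rfl⟩, (act_dblv σ ε μ).symm⟩
  · rintro ⟨e, he, rfl⟩
    obtain ⟨σ, ε, rfl⟩ := mem_orbit.1 he
    exact mem_orbit.2 ⟨σ, ε, act_dblv σ ε μ⟩

lemma Phi_mm (μ : Pt n) : Phi (mm μ) = mm (dblv μ) := by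
  rw [mm, map_sum, mm, orbit_dblv]
  rw [Finset.sum_image (fun a _ b _ h => dblv_injective h)]
  apply Finset.sum_congr rfl
  intro d _
  exact Phi_single d 1

/-! ### the ν vectors and the decomposition λ = 2μ + ν(S) -/

noncomputable def nuF (S : Finset (Fin n)) : Pt n :=
  fun i => (((S.filter (fun j => i ≤ j)).card : ℤ))

lemma dominant_nuF (S : Finset (Fin n)) : dominant (nuF S) := by
  constructor
  · intro i j hij
    simp only [nuF, Nat.cast_le]
    apply Finset.card_le_card
    intro x hx
    rw [Finset.mem_filter] at hx ⊢
    exact ⟨hx.1, le_trans hij hx.2⟩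
  · intro i
    simp [nuF]

lemma lext_nuF (S : Finset (Fin n)) (m : ℕ) :
    lext (nuF S) m = ((S.filter (fun j => m ≤ j.1)).card : ℤ) := by
  unfold lext
  by_cases hm : m < n
  · rw [dif_pos hm]
    simp only [nuF]
    have he : S.filter (fun j => (⟨m, hm⟩ : Fin n) ≤ j) = S.filter (fun j => m ≤ j.1) :=
      Finset.filter_congr (fun j _ => by simp [Fin.le_def])
    rw [he]
  · rw [dif_neg hm]
    have : S.filter (fun j => m ≤ j.1) = ∅ := by
      apply Finset.filter_false_of_mem
      intro j _
      have := j.2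
      omega
    rw [this]
    simp

lemma nuF_diff (S : Finset (Fin n)) {m : ℕ} (hm : m < n) :
    lext (nuF S) m - lext (nuF S) (m + 1) = if (⟨m, hm⟩ : Fin n) ∈ S then 1 else 0 := by
  classical
  rw [lext_nuF, lext_nuF]
  have hsplit : S.filter (fun j => m ≤ j.1)
      = S.filter (fun j => m + 1 ≤ j.1) ∪ S.filter (fun j => j = ⟨m, hm⟩) := by
    ext j
    simp only [Finset.mem_filter, Finset.mem_union]
    constructor
    · intro ⟨h1, h2⟩
      by_cases h : m + 1 ≤ j.1
      · exact Or.inl ⟨h1, h⟩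
      · exact Or.inr ⟨h1, Fin.ext (show j.1 = m by omega)⟩
    · intro h
      rcases h with ⟨h1, h2⟩ | ⟨h1, h2⟩
      · exact ⟨h1, by omega⟩
      · exact ⟨h1, by rw [h2]⟩
  have hdisj : Disjoint (S.filter (fun j => m + 1 ≤ j.1)) (S.filter (fun j => j = ⟨m, hm⟩)) := by
    rw [Finset.disjoint_left]
    intro j h1 h2
    rw [Finset.mem_filter] at h1 h2
    rw [h2.2] at h1
    have h5 : m + 1 ≤ m := h1.2
    omega
  rw [hsplit, Finset.card_union_of_disjoint hdisj, Finset.filter_eq' S (⟨m, hm⟩ : Fin n)]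
  by_cases h : (⟨m, hm⟩ : Fin n) ∈ S
  · rw [if_pos h, if_pos h]
    simp
  · rw [if_neg h, if_neg h]
    simp

lemma lext_add (a b : Pt n) (m : ℕ) : lext (a + b) m = lext a m + lext b m := by
  unfold lext
  split <;> simp

lemma lext_dblv (a : Pt n) (m : ℕ) : lext (dblv a) m = 2 * lext a m := by
  unfold lext
  split <;> simp [dblv]

/-- the set of positions where the successive difference is odd -/
noncomputable def Sof (l : Pt n) : Finset (Fin n) :=
  Finset.univ.filter (fun i => ¬ (2 ∣ (lext l i.1 - lext l (i.1 + 1))))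

lemma mem_Sof {l : Pt n} {i : Fin n} :
    i ∈ Sof l ↔ ¬ (2 ∣ (lext l i.1 - lext l (i.1 + 1))) := by
  simp [Sof]

lemma parity_aux (l : Pt n) : ∀ t m : ℕ, n - m ≤ t →
    2 ∣ (lext l m - lext (nuF (Sof l)) m) := by
  intro t
  induction t with
  | zero =>
    intro m hm
    have hmn : ¬ m < n := by omega
    rw [lext, dif_neg hmn, lext, dif_neg hmn]
    simp
  | succ t ih =>
    intro m hm
    by_cases h : m < n
    · have h1 := ih (m + 1) (by omega)
      have h2 := nuF_diff (Sof l) h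
      by_cases hd : 2 ∣ (lext l m - lext l (m + 1))
      · rw [if_neg (by rw [mem_Sof]; exact not_not_intro hd)] at h2
        omega
      · rw [if_pos (mem_Sof.2 hd)] at h2
        omega
    · have hmn : ¬ m < n := h
      rw [lext, dif_neg hmn, lext, dif_neg hmn]
      simp

lemma parity (l : Pt n) (m : ℕ) : 2 ∣ (lext l m - lext (nuF (Sof l)) m) :=
  parity_aux l (n - m) m (le_refl _)

lemma nuF_diff_le {l : Pt n} (hl : dominant l) {m : ℕ} (hm : m < n) :
    lext (nuF (Sof l)) m - lext (nuF (Sof l)) (m + 1) ≤ lext l m - lext l (m + 1) := by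
  rw [nuF_diff (Sof l) hm]
  have hd : 0 ≤ lext l m - lext l (m + 1) := sub_nonneg.2 (lext_anti hl (by omega))
  by_cases h : (⟨m, hm⟩ : Fin n) ∈ Sof l
  · rw [if_pos h]
    have h5 : ¬ (2 ∣ (lext l m - lext l (m + 1))) := mem_Sof.1 h
    omega
  · rw [if_neg h]
    omega

lemma nuF_le_aux (l : Pt n) (hl : dominant l) : ∀ t m : ℕ, n - m ≤ t →
    lext (nuF (Sof l)) m ≤ lext l m := by
  intro t
  induction t with
  | zero =>
    intro m hm
    have hmn : ¬ m < n := by omega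
    rw [lext, dif_neg hmn, lext, dif_neg hmn]
  | succ t ih =>
    intro m hm
    by_cases h : m < n
    · have h1 := ih (m + 1) (by omega)
      have h2 := nuF_diff_le hl h
      omega
    · rw [lext, dif_neg h, lext, dif_neg h]

lemma nuF_le {l : Pt n} (hl : dominant l) (m : ℕ) :
    lext (nuF (Sof l)) m ≤ lext l m :=
  nuF_le_aux l hl (n - m) m (le_refl _)

lemma sub_anti {l : Pt n} (hl : dominant l) {a b : ℕ} (hab : a ≤ b) :
    lext l b - lext (nuF (Sof l)) b ≤ lext l a - lext (nuF (Sof l)) a := by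
  have key : ∀ t, ∀ a, a + t = b →
      lext l b - lext (nuF (Sof l)) b ≤ lext l a - lext (nuF (Sof l)) a := by
    intro t
    induction t with
    | zero => intro a ha; rw [show a = b by omega]
    | succ t ih =>
      intro a ha
      have h1 := ih (a + 1) (by omega)
      by_cases h : a < n
      · have h2 := nuF_diff_le hl h
        omega
      · have hge : lext l a = lext l (a+1) := by
          rw [lext, dif_neg h, lext, dif_neg (by omega)]
        have hge2 : lext (nuF (Sof l)) a = lext (nuF (Sof l)) (a+1) := by
          rw [lext, dif_neg h, lext, dif_neg (by omega)]
        omega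
  exact key (b - a) a (by omega)

lemma lext_apply (l : Pt n) (i : Fin n) : lext l i.1 = l i := by
  rw [lext, dif_pos i.2]

lemma decomp_exists {l : Pt n} (hl : dominant l) :
    ∃ (S : Finset (Fin n)) (μ : Pt n), dominant μ ∧ l = dblv μ + nuF S := by
  refine ⟨Sof l, fun i => (l i - nuF (Sof l) i) / 2, ⟨?_, ?_⟩, ?_⟩
  · intro i j hij
    have h1 : lext l j.1 - lext (nuF (Sof l)) j.1 ≤ lext l i.1 - lext (nuF (Sof l)) i.1 :=
      sub_anti hl (Fin.le_def.1 hij)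
    rw [lext_apply, lext_apply, lext_apply, lext_apply] at h1
    exact Int.ediv_le_ediv (by omega) h1
  · intro i
    have h1 := nuF_le hl i.1
    rw [lext_apply, lext_apply] at h1
    exact Int.ediv_nonneg (by omega) (by omega)
  · funext i
    have h1 := parity l i.1
    rw [lext_apply, lext_apply] at h1
    simp only [Pi.add_apply, dblv]
    rw [Int.mul_ediv_cancel' h1]
    ring

lemma decomp_unique {μ μ' : Pt n} {S S' : Finset (Fin n)}
    (h : dblv μ + nuF S = dblv μ' + nuF S') : S = S' ∧ μ = μ' := by
  have hS : S = S' := by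
    ext i
    have h1 : lext (dblv μ + nuF S) i.1 - lext (dblv μ + nuF S) (i.1 + 1)
        = lext (dblv μ' + nuF S') i.1 - lext (dblv μ' + nuF S') (i.1 + 1) := by rw [h]
    rw [lext_add, lext_add, lext_add, lext_add, lext_dblv, lext_dblv, lext_dblv, lext_dblv] at h1
    have h2 := nuF_diff S i.2
    have h3 := nuF_diff S' i.2
    have hi : (⟨i.1, i.2⟩ : Fin n) = i := Fin.eta i i.2
    rw [hi] at h2 h3
    by_cases hin : i ∈ S <;> by_cases hin' : i ∈ S'
    · simp [hin, hin']
    · rw [if_pos hin] at h2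
      rw [if_neg hin'] at h3
      omega
    · rw [if_neg hin] at h2
      rw [if_pos hin'] at h3
      omega
    · simp [hin, hin']
  refine ⟨hS, ?_⟩
  funext i
  have h1 : dblv μ i + nuF S i = dblv μ' i + nuF S' i := congrFun h i
  rw [hS] at h1
  simp only [dblv] at h1
  omega

/-! ### the subring R₀ -/

def ySet (n : ℕ) : Set (LaurentRing n) :=
  {g | ∃ i : Fin n, g = lmono n (Pi.single i 2) + lmono n (Pi.single i (-2))}

def IsR0 (c : LaurentRing n) : Prop :=
  c ∈ Algebra.adjoin ℂ (ySet n) ∧ ∀ σ : Equiv.Perm (Fin n), wAct n σ (fun _ => 1) c = c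

lemma dblv_single (i : Fin n) (c : ℤ) : dblv (Pi.single i c) = Pi.single i (2 * c) := by
  funext j
  by_cases hj : j = i
  · subst hj; simp [dblv]
  · simp [dblv, Pi.single_eq_of_ne hj]

lemma Phi_zz (i : Fin n) :
    Phi (zz i) = lmono n (Pi.single i 2) + lmono n (Pi.single i (-2)) := by
  rw [zz, lmono, lmono, AddMonoidAlgebra.ofCoeff_single, AddMonoidAlgebra.ofCoeff_single, map_add, Phi_single, Phi_single, lmono, lmono, dblv_single, dblv_single]
  norm_num

lemma ySet_eq : ySet n = Phi '' zSet n := by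
  ext g
  constructor
  · rintro ⟨i, rfl⟩
    exact ⟨zz i, zz_mem_zSet i, Phi_zz i⟩
  · rintro ⟨g', ⟨i, rfl⟩, rfl⟩
    exact ⟨i, Phi_zz i⟩

lemma adjoin_ySet : Algebra.adjoin ℂ (ySet n) = (Algebra.adjoin ℂ (zSet n)).map Phi := by
  rw [ySet_eq, AlgHom.map_adjoin]

lemma isR0_iff {c : LaurentRing n} : IsR0 c ↔ ∃ u, IsInv u ∧ c = Phi u := by
  constructor
  · rintro ⟨hadj, hsym⟩
    rw [adjoin_ySet] at hadj
    obtain ⟨u, hu, rfl⟩ := Subalgebra.mem_map.1 hadj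
    refine ⟨u, ?_, rfl⟩
    rw [isInv_iff]
    refine ⟨hu, fun σ => Phi_injective ?_⟩
    rw [← Phi_wAct, hsym σ]
  · rintro ⟨u, hu, rfl⟩
    constructor
    · rw [adjoin_ySet]
      exact Subalgebra.mem_map.2 ⟨u, ((isInv_iff u).1 hu).1, rfl⟩
    · intro σ
      rw [Phi_wAct, hu σ _]

lemma IsR0.zero : IsR0 (0 : LaurentRing n) :=
  ⟨Subalgebra.zero_mem _, fun σ => by rw [wAct_eq, map_zero]⟩

lemma IsR0.add {a b : LaurentRing n} (ha : IsR0 a) (hb : IsR0 b) : IsR0 (a + b) :=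
  ⟨Subalgebra.add_mem _ ha.1 hb.1,
   fun σ => by rw [wAct_eq, map_add, ← wAct_eq, ← wAct_eq, ha.2 σ, hb.2 σ]⟩

lemma IsR0.sub {a b : LaurentRing n} (ha : IsR0 a) (hb : IsR0 b) : IsR0 (a - b) :=
  ⟨Subalgebra.sub_mem _ ha.1 hb.1,
   fun σ => by rw [wAct_eq, map_sub, ← wAct_eq, ← wAct_eq, ha.2 σ, hb.2 σ]⟩

lemma IsR0.smul (c : ℂ) {a : LaurentRing n} (ha : IsR0 a) : IsR0 (c • a) :=
  ⟨Subalgebra.smul_mem _ ha.1 c,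
   fun σ => by rw [wAct_eq, map_smul, ← wAct_eq, ha.2 σ]⟩

lemma IsR0.sum {ι : Type*} {s : Finset ι} {F : ι → LaurentRing n}
    (h : ∀ i ∈ s, IsR0 (F i)) : IsR0 (∑ i ∈ s, F i) := by
  classical
  induction s using Finset.induction_on with
  | empty => simpa using IsR0.zero
  | @insert a s ha ih =>
    rw [Finset.sum_insert ha]
    exact (h a (Finset.mem_insert_self a s)).add
      (ih fun i hi => h i (Finset.mem_insert_of_mem hi))

lemma isR0_phi_mm {μ : Pt n} : IsR0 (mm (dblv μ)) :=
  isR0_iff.2 ⟨mm μ, mm_isInv μ, (Phi_mm μ).symm⟩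

/-! ### choice of decomposition -/

open scoped Classical in
noncomputable def decS (l : Pt n) : Finset (Fin n) :=
  if hl : dominant l then (decomp_exists hl).choose else ∅

open scoped Classical in
noncomputable def decMu (l : Pt n) : Pt n :=
  if hl : dominant l then (decomp_exists hl).choose_spec.choose else 0

lemma decMu_dominant {l : Pt n} (hl : dominant l) : dominant (decMu l) := by
  classical
  rw [decMu, dif_pos hl]
  exact (decomp_exists hl).choose_spec.choose_spec.1

lemma dec_eq {l : Pt n} (hl : dominant l) : l = dblv (decMu l) + nuF (decS l) := by
  classical
  rw [decMu, decS, dif_pos hl, dif_pos hl]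
  exact (decomp_exists hl).choose_spec.choose_spec.2

/-! ### existence of the representation -/

lemma exist_rep : ∀ b : ℕ, ∀ f : LaurentRing n, IsInv f → (∀ d : Pt n, f d ≠ 0 → ht d < b) →
    ∃ c : Finset (Fin n) → LaurentRing n, (∀ S, IsR0 (c S)) ∧
      f = ∑ S : Finset (Fin n), c S * mm (nuF S) := by
  intro b
  induction b with
  | zero =>
    intro f hf hb
    have hf0 : f = 0 := by
      by_contra h
      obtain ⟨d, hd⟩ := Finsupp.support_nonempty_iff.2 (fun hc => h (AddMonoidAlgebra.coeff_injective (hc.trans rfl)))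
      have hd' : f d ≠ 0 := Finsupp.mem_support_iff.1 hd
      have h1 : f (domRep d) ≠ 0 := by rwa [← isInv_apply_eq_domRep hf]
      have h2 := hb (domRep d) h1
      have h3 := ht_nonneg (domRep_dominant d)
      omega
    exact ⟨0, fun S => IsR0.zero, by simp [hf0]⟩
  | succ b ih =>
    intro f hf hb
    classical
    have herr : ∀ l ∈ domSupp f, ∃ r : LaurentRing n,
        mm (dblv (decMu l)) * mm (nuF (decS l)) = mm l + r ∧ IsInv r ∧
        ∀ d : Pt n, ht l ≤ ht d → r d = 0 := by
      intro l hl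
      have hdom := (mem_domSupp.1 hl).2
      obtain ⟨r, hr, h2, h3⟩ := mm_mul_decomp (dominant_dblv (decMu_dominant hdom))
        (dominant_nuF (decS l))
      rw [← dec_eq hdom] at hr h3
      exact ⟨r, hr, h2, h3⟩
    choose rr hrr1 hrr2 hrr3 using herr
    set g : LaurentRing n := ∑ l ∈ (domSupp f).attach, f l.1 • rr l.1 l.2 with hg
    have hgI : IsInv g := IsInv.sum (fun l _ => IsInv.smul _ (hrr2 l.1 l.2))
    have hgB : ∀ d : Pt n, g d ≠ 0 → ht d < b := by
      intro d hd
      rw [hg, lsum_apply] at hd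
      obtain ⟨l, hl, hne⟩ := Finset.exists_ne_zero_of_sum_ne_zero hd
      rw [lsmul_apply] at hne
      have hrd : rr l.1 l.2 d ≠ 0 := fun hc => hne (by rw [hc, smul_zero])
      have h4 : ht d < ht l.1 := by
        by_contra hc
        exact hrd (hrr3 l.1 l.2 d (le_of_not_gt hc))
      have h5 : ht l.1 < b + 1 := hb l.1 (mem_domSupp.1 l.2).1
      omega
    obtain ⟨c', hc'1, hc'2⟩ := ih g hgI hgB
    have hexp : f = ∑ l ∈ (domSupp f).attach,
        f l.1 • (mm (dblv (decMu l.1)) * mm (nuF (decS l.1))) - g := by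
      rw [hg, ← Finset.sum_sub_distrib]
      have hterm : ∀ l ∈ (domSupp f).attach,
          f l.1 • (mm (dblv (decMu l.1)) * mm (nuF (decS l.1))) - f l.1 • rr l.1 l.2
          = f l.1 • mm l.1 := by
        intro l _
        rw [hrr1 l.1 l.2, smul_add]
        ring
      rw [Finset.sum_congr rfl hterm, Finset.sum_attach (domSupp f) (fun l => f l • mm l)]
      exact expansion hf
    set A : Finset (Fin n) → LaurentRing n := fun S =>
      ∑ l ∈ (domSupp f).attach.filter (fun l => decS l.1 = S),
        f l.1 • mm (dblv (decMu l.1)) with hA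
    have hgroup : ∑ l ∈ (domSupp f).attach,
        f l.1 • (mm (dblv (decMu l.1)) * mm (nuF (decS l.1)))
        = ∑ S : Finset (Fin n), A S * mm (nuF S) := by
      rw [← Finset.sum_fiberwise ((domSupp f).attach) (fun l => decS l.1)
        (fun l => f l.1 • (mm (dblv (decMu l.1)) * mm (nuF (decS l.1))))]
      apply Finset.sum_congr rfl
      intro S _
      rw [hA, Finset.sum_mul]
      apply Finset.sum_congr rfl
      intro l hl
      rw [Finset.mem_filter] at hl
      rw [smul_mul_assoc, hl.2]
    refine ⟨fun S => A S - c' S, ?_, ?_⟩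
    · intro S
      refine IsR0.sub ?_ (hc'1 S)
      exact IsR0.sum (fun l _ => IsR0.smul _ isR0_phi_mm)
    · rw [hexp, hgroup, hc'2, ← Finset.sum_sub_distrib]
      apply Finset.sum_congr rfl
      intro S _
      rw [sub_mul]

/-! ### uniqueness of the representation -/

lemma rep_unique (c : Finset (Fin n) → LaurentRing n) (hc : ∀ S, IsR0 (c S))
    (h : ∑ S : Finset (Fin n), c S * mm (nuF S) = 0) : ∀ S, c S = 0 := by
  classical
  choose u hu hcu using (fun S => isR0_iff.1 (hc S))
  suffices hsuff : ∀ S, u S = 0 by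
    intro S
    rw [hcu S, hsuff S, map_zero]
  by_contra hcon
  push_neg at hcon
  set PP : Finset ((_ : Finset (Fin n)) × Pt n) :=
    Finset.univ.sigma (fun S => domSupp (u S)) with hPP
  have hPPne : PP.Nonempty := by
    obtain ⟨S0, hS0⟩ := hcon
    obtain ⟨d, hd⟩ := Finsupp.support_nonempty_iff.2 (fun hc => hS0 (AddMonoidAlgebra.coeff_injective (hc.trans rfl)))
    have hd' : (u S0) d ≠ 0 := Finsupp.mem_support_iff.1 hd
    have hds : domRep d ∈ domSupp (u S0) :=
      mem_domSupp.2 ⟨by rwa [← isInv_apply_eq_domRep (hu S0)], domRep_dominant d⟩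
    exact ⟨⟨S0, domRep d⟩, Finset.mem_sigma.2 ⟨Finset.mem_univ _, hds⟩⟩
  obtain ⟨p, hp, hmax⟩ := Finset.exists_max_image PP (fun p => ht (dblv p.2 + nuF p.1)) hPPne
  set lstar : Pt n := dblv p.2 + nuF p.1 with hls
  have hterm : ∀ S, c S * mm (nuF S)
      = ∑ μ ∈ domSupp (u S), (u S) μ • (mm (dblv μ) * mm (nuF S)) := by
    intro S
    rw [hcu S]
    conv_lhs => rw [expansion (hu S)]
    rw [map_sum, Finset.sum_mul]
    apply Finset.sum_congr rfl
    intro μ _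
    rw [map_smul, Phi_mm, smul_mul_assoc]
  rw [Finset.sum_congr rfl (fun S _ => hterm S)] at h
  have h0 : (∑ S : Finset (Fin n), ∑ μ ∈ domSupp (u S),
      (u S) μ • (mm (dblv μ) * mm (nuF S))) lstar = (0 : ℂ) := by rw [h]; rfl
  rw [lsum_apply] at h0
  have hcoef : ∀ S : Finset (Fin n), ∀ μ ∈ domSupp (u S), (mm (dblv μ) * mm (nuF S)) lstar
      = if S = p.1 ∧ μ = p.2 then 1 else 0 := by
    intro S μ hμ
    have hμd : dominant μ := (mem_domSupp.1 hμ).2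
    have hmem : (⟨S, μ⟩ : (_ : Finset (Fin n)) × Pt n) ∈ PP :=
      Finset.mem_sigma.2 ⟨Finset.mem_univ _, hμ⟩
    have hle : ht (dblv μ + nuF S) ≤ ht lstar := hmax ⟨S, μ⟩ hmem
    by_cases he : lstar = dblv μ + nuF S
    · obtain ⟨h1, h2⟩ := decomp_unique (he ▸ hls : dblv μ + nuF S = dblv p.2 + nuF p.1)
      rw [if_pos ⟨h1, h2⟩, he, mm_mul_apply_top (dominant_dblv hμd) (dominant_nuF S)]
    · rw [if_neg, mm_mul_apply_ne (dominant_dblv hμd) (dominant_nuF S) hle he]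
      rintro ⟨rfl, rfl⟩
      exact he rfl
  have hinner : ∀ S : Finset (Fin n), (∑ μ ∈ domSupp (u S),
      (u S) μ • (mm (dblv μ) * mm (nuF S))) lstar
      = if S = p.1 then (u p.1) p.2 else 0 := by
    intro S
    rw [lsum_apply]
    by_cases hS : S = p.1
    · subst hS
      rw [if_pos rfl]
      have hp2 : p.2 ∈ domSupp (u p.1) := (Finset.mem_sigma.1 hp).2
      rw [Finset.sum_eq_single_of_mem p.2 hp2]
      · rw [lsmul_apply, hcoef p.1 p.2 hp2, if_pos ⟨rfl, rfl⟩, smul_eq_mul, mul_one]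
      · intro μ hμ hne
        rw [lsmul_apply, hcoef p.1 μ hμ, if_neg (fun hq => hne hq.2), smul_zero]
    · rw [if_neg hS]
      apply Finset.sum_eq_zero
      intro μ hμ
      rw [lsmul_apply, hcoef S μ hμ, if_neg (fun hq => hS hq.1), smul_zero]
  rw [Finset.sum_congr rfl (fun S _ => hinner S), Finset.sum_ite_eq'
    Finset.univ p.1 (fun _ => (u p.1) p.2), if_pos (Finset.mem_univ _)] at h0
  exact (mem_domSupp.1 (Finset.mem_sigma.1 hp).2).1 h0

end Stmt10


open Stmt10 in
/-- the `W = S_n ⋉ {±1}ⁿ`-invariants of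
`R = ℂ[x₁^{±1},…,x_n^{±1}]` equal `ℂ[x₁+x₁⁻¹,…,x_n+x_n⁻¹]^{S_n}`, and form a
free module of rank `2ⁿ` over `R₀ = ℂ[x₁²+x₁⁻²,…,x_n²+x_n⁻²]^{S_n}`. -/
theorem stmt10 (n : ℕ) :
    ({f : LaurentRing n | ∀ (σ : Equiv.Perm (Fin n)) (ε : Fin n → ℤˣ), wAct n σ ε f = f}
      = {f : LaurentRing n |
          f ∈ Algebra.adjoin ℂ
            {g : LaurentRing n | ∃ i : Fin n,
              g = lmono n (Pi.single i 1) + lmono n (Pi.single i (-1))} ∧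
          ∀ σ : Equiv.Perm (Fin n), wAct n σ (fun _ => 1) f = f}) ∧
    ∃ p : Fin (2 ^ n) → LaurentRing n,
      (∀ j, ∀ (σ : Equiv.Perm (Fin n)) (ε : Fin n → ℤˣ), wAct n σ ε (p j) = p j) ∧
      ∀ f : LaurentRing n,
        (∀ (σ : Equiv.Perm (Fin n)) (ε : Fin n → ℤˣ), wAct n σ ε f = f) →
        ∃! c : Fin (2 ^ n) → LaurentRing n,
          (∀ j, c j ∈ Algebra.adjoin ℂ
              {g : LaurentRing n | ∃ i : Fin n,
                g = lmono n (Pi.single i 2) + lmono n (Pi.single i (-2))} ∧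
            ∀ σ : Equiv.Perm (Fin n), wAct n σ (fun _ => 1) (c j) = c j) ∧
          f = ∑ j, c j * p j := by
  classical
  constructor
  · ext f
    simp only [Set.mem_setOf_eq]
    exact isInv_iff f
  · set E : Fin (2 ^ n) ≃ Finset (Fin n) :=
      (Fintype.equivFinOfCardEq (by simp [Fintype.card_finset] :
        Fintype.card (Finset (Fin n)) = 2 ^ n)).symm with hE
    refine ⟨fun j => mm (nuF (E j)), fun j => mm_isInv _, ?_⟩
    intro f hf
    set b : ℕ := f.coeff.support.sup (fun d => (ht d).toNat) + 1 with hb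
    have hbB : ∀ d : Fin n → ℤ, f d ≠ 0 → ht d < (b : ℤ) := by
      intro d hd
      have h1 : d ∈ f.coeff.support := Finsupp.mem_support_iff.2 hd
      have h2 : (ht d).toNat ≤ f.coeff.support.sup (fun d => (ht d).toNat) := Finset.le_sup (f := fun d => (ht d).toNat) h1
      have h3 := Int.self_le_toNat (ht d)
      have h4 : ((ht d).toNat : ℤ) ≤ ((f.coeff.support.sup (fun d => (ht d).toNat) : ℕ) : ℤ) :=
        Int.ofNat_le.2 h2
      omega
    obtain ⟨c, hc1, hc2⟩ := exist_rep b f hf hbB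
    refine ⟨fun j => c (E j), ⟨?_, ?_⟩, ?_⟩
    · intro j
      exact ⟨(hc1 (E j)).1, (hc1 (E j)).2⟩
    · rw [hc2]
      exact (Equiv.sum_comp E (fun S => c S * mm (nuF S))).symm
    · rintro c₂ ⟨hc₂1, hc₂2⟩
      have hz := rep_unique (fun S => c₂ (E.symm S) - c S) (fun S =>
        IsR0.sub ⟨(hc₂1 (E.symm S)).1, (hc₂1 (E.symm S)).2⟩ (hc1 S)) ?_
      · funext j
        have hzj := hz (E j)
        simp only [Equiv.symm_apply_apply] at hzj
        have : c₂ j - c (E j) = 0 := hzj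
        have h5 : c₂ j = c (E j) := by
          rwa [sub_eq_zero] at this
        exact h5
      · have hre : ∑ S : Finset (Fin n), c₂ (E.symm S) * mm (nuF S)
            = ∑ j, c₂ j * mm (nuF (E j)) := by
          rw [← Equiv.sum_comp E (fun S => c₂ (E.symm S) * mm (nuF S))]
          apply Finset.sum_congr rfl
          intro j _
          rw [Equiv.symm_apply_apply]
        have hff : ∑ S : Finset (Fin n), c₂ (E.symm S) * mm (nuF S) = f := by
          rw [hre, ← hc₂2]
        calc ∑ S : Finset (Fin n), (c₂ (E.symm S) - c S) * mm (nuF S)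
            = ∑ S : Finset (Fin n), (c₂ (E.symm S) * mm (nuF S) - c S * mm (nuF S)) := by
              apply Finset.sum_congr rfl
              intro S _
              rw [sub_mul]
          _ = ∑ S : Finset (Fin n), c₂ (E.symm S) * mm (nuF S)
              - ∑ S : Finset (Fin n), c S * mm (nuF S) := Finset.sum_sub_distrib _ _
          _ = f - f := by rw [hff, ← hc2]
          _ = 0 := sub_self f
end

section
/- Let q > 1 be real, ℓ ≥ 0 an integer, and s a complex number with q^{2s} ≠ 1. Then the rational function identity holds: (1/(1+q⁻¹)) · [ ∑_{r=0}^{ℓ} q^{−(2r−ℓ)(s−1/2)} q^{−r}(1−q⁻¹) + q^{−ℓ(s−1/2)} q^{−(ℓ+1)} + q⁻¹ q^{ℓ(s−1/2)} ] = (q^{−ℓ/2}/(1+q⁻¹)) · [ q^{ℓs}(1−q^{−2s−1})/(1−q^{−2s}) + q^{−ℓs}(1−q^{2s−1})/(1−q^{2s}) ], and the right-hand side is invariant under s ↦ −s. -/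
open Complex

/-- The right-hand side
`q^{ℓs}(1−q^{−2s−1})/(1−q^{−2s}) + q^{−ℓs}(1−q^{2s−1})/(1−q^{2s})` of the
rank-one spherical function formula. -/
noncomputable def sphRHS (q : ℝ) (ℓ : ℕ) (s : ℂ) : ℂ :=
  (q : ℂ) ^ ((ℓ : ℂ) * s) * (1 - (q : ℂ) ^ (-2 * s - 1)) / (1 - (q : ℂ) ^ (-2 * s))
    + (q : ℂ) ^ (-(ℓ : ℂ) * s) * (1 - (q : ℂ) ^ (2 * s - 1)) / (1 - (q : ℂ) ^ (2 * s))

lemma sph_aux (P p Q r A a B b : ℂ) (hp : P*p = 1) (hr : Q*r = 1) (ha : A*a = 1) (hb : B*b = 1)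
    (h1 : a - 1 ≠ 0) (h2 : 1 - a ≠ 0) (h3 : 1 - A ≠ 0) (h4 : 1 + b ≠ 0) :
    1/(1+b) * (P * r * (1-b) * ((p*(p*a) - 1)/(a-1)) + p*Q*(r*(r*b)) + b*(P*r))
      = r/(1+b) * (P*(1-a*b)/(1-a) + p*(1-A*b)/(1-A)) := by
  have hL : P * r * (1-b) * ((p*(p*a) - 1)/(a-1)) + p*Q*(r*(r*b)) + b*(P*r)
      = (P * r * (1-b) * (p*(p*a) - 1) + (p*Q*(r*(r*b)) + b*(P*r)) * (a-1)) / (a-1) := by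
    rw [mul_div_assoc' (P * r * (1-b)), add_assoc, div_add' _ _ _ h1]
  have hR : P*(1-a*b)/(1-a) + p*(1-A*b)/(1-A)
      = (P*(1-a*b)*(1-A) + p*(1-A*b)*(1-a)) / ((1-a)*(1-A)) := by
    rw [div_add_div _ _ h2 h3]; ring
  rw [hL, hR, div_mul_div_comm, div_mul_div_comm, one_mul,
      div_eq_div_iff (mul_ne_zero h4 h1) (mul_ne_zero h4 (mul_ne_zero h2 h3))]
  linear_combination
    (p*r*a - p*r*a*b^2 - p*r*a^2 + p*r*a^2*b^2 - p*r*A*a + p*r*A*a*b^2 + p*r*A*a^2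
      - p*r*A*a^2*b^2) * hp
    + (-(p*r*b) - p*r*b^2 + 2*p*r*a*b + 2*p*r*a*b^2 - p*r*a^2*b - p*r*a^2*b^2 + p*r*A*b
      + p*r*A*b^2 - 2*p*r*A*a*b - 2*p*r*A*a*b^2 + p*r*A*a^2*b + p*r*A*a^2*b^2) * hr
    + (-(p*r) + p*r*b^2 + p*r*a - p*r*a*b^2) * ha

/-- the rational function identity computing the rank-one
spherical function, and the invariance of the right-hand side under
`s ↦ −s`. -/
theorem stmt14 (q : ℝ) (hq : 1 < q) (ℓ : ℕ) (s : ℂ) (hs : (q : ℂ) ^ (2 * s) ≠ 1) :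
    (1 / (1 + (q : ℂ)⁻¹)) *
      ((∑ r ∈ Finset.range (ℓ + 1),
          (q : ℂ) ^ (-(2 * (r : ℂ) - (ℓ : ℂ)) * (s - 1 / 2)) * (q : ℂ) ^ (-(r : ℂ))
            * (1 - (q : ℂ)⁻¹))
        + (q : ℂ) ^ (-(ℓ : ℂ) * (s - 1 / 2)) * (q : ℂ) ^ (-((ℓ : ℂ) + 1))
        + (q : ℂ)⁻¹ * (q : ℂ) ^ ((ℓ : ℂ) * (s - 1 / 2)))
      = ((q : ℂ) ^ (-(ℓ : ℂ) / 2) / (1 + (q : ℂ)⁻¹)) * sphRHS q ℓ s ∧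
    sphRHS q ℓ s = sphRHS q ℓ (-s) := by
  have hq0' : (0:ℝ) < q := lt_trans one_pos hq
  have hq0 : (q:ℂ) ≠ 0 := by simpa using ne_of_gt hq0'
  set X := Complex.exp (Complex.log q * s) with hX
  set Y := Complex.exp (Complex.log q * (1/2)) with hY
  have hXne : X ≠ 0 := Complex.exp_ne_zero _
  have hYne : Y ≠ 0 := Complex.exp_ne_zero _
  have he : ∀ a b : ℤ, (q:ℂ) ^ ((a:ℂ)*s + (b:ℂ)*(1/2)) = X^a * Y^b := by
    intro a b
    rw [Complex.cpow_def_of_ne_zero hq0, mul_add,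
        show Complex.log q * ((a:ℂ)*s) = (a:ℂ)*(Complex.log q * s) by ring,
        show Complex.log q * ((b:ℂ)*(1/2)) = (b:ℂ)*(Complex.log q * (1/2)) by ring,
        Complex.exp_add, Complex.exp_int_mul, Complex.exp_int_mul]
  have hqi : (q:ℂ)⁻¹ = Y^(-2:ℤ) := by
    have h := he 0 (-2)
    rw [show (((0:ℤ)):ℂ)*s + (((-2:ℤ)):ℂ)*(1/2) = (-1 : ℂ) by push_cast; ring] at h
    rw [Complex.cpow_neg_one] at h
    simpa using h
  have hX2 : X^(2:ℤ) ≠ 1 := by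
    have h := hs
    rw [show (2:ℂ)*s = (((2:ℤ)):ℂ)*s + (((0:ℤ)):ℂ)*(1/2) by push_cast; ring, he] at h
    simpa using h
  have hXm2 : X^(-2:ℤ) ≠ 1 := by
    rw [zpow_neg, ne_eq, inv_eq_one]; exact hX2
  -- the per-term simplification of the sum
  have hterm : ∀ r ∈ Finset.range (ℓ+1),
      (q : ℂ) ^ (-(2 * (r : ℂ) - (ℓ : ℂ)) * (s - 1 / 2)) * (q : ℂ) ^ (-(r : ℂ))
        * (1 - (q : ℂ)⁻¹)
      = (X^(ℓ:ℤ) * (Y^(ℓ:ℤ))⁻¹ * (1 - Y^(-2:ℤ))) * (X^(-2:ℤ))^r := by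
    intro r _
    rw [show -(2 * (r : ℂ) - (ℓ : ℂ)) * (s - 1 / 2)
          = ((ℓ - 2*r : ℤ):ℂ)*s + ((2*r - ℓ : ℤ):ℂ)*(1/2) by push_cast; ring,
        show -(r : ℂ) = ((0:ℤ):ℂ)*s + ((-2*r : ℤ):ℂ)*(1/2) by push_cast; ring,
        he, he, hqi]
    calc X^(((ℓ:ℤ) - 2*(r:ℤ))) * Y^((2*(r:ℤ) - (ℓ:ℤ))) * (X^((0:ℤ)) * Y^((-2*(r:ℤ)):ℤ))
            * (1 - Y^(-2:ℤ))
        = X^(((ℓ:ℤ) - 2*(r:ℤ))) * (Y^((2*(r:ℤ) - (ℓ:ℤ))) * Y^((-2*(r:ℤ)):ℤ)) * (1 - Y^(-2:ℤ)) := by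
          rw [zpow_zero]; ring
      _ = X^(((ℓ:ℤ) - 2*(r:ℤ))) * Y^(-(ℓ:ℤ)) * (1 - Y^(-2:ℤ)) := by
          rw [← zpow_add₀ hYne, show (2*(r:ℤ) - (ℓ:ℤ)) + (-2*(r:ℤ)) = -(ℓ:ℤ) by ring]
      _ = (X^(ℓ:ℤ) * X^((-2)*(r:ℤ))) * Y^(-(ℓ:ℤ)) * (1 - Y^(-2:ℤ)) := by
          rw [← zpow_add₀ hXne, show (ℓ:ℤ) + (-2)*(r:ℤ) = (ℓ:ℤ) - 2*(r:ℤ) by ring]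
      _ = (X^(ℓ:ℤ) * (Y^(ℓ:ℤ))⁻¹ * (1 - Y^(-2:ℤ))) * (X^(-2:ℤ))^r := by
          rw [zpow_mul X (-2) (r:ℤ), zpow_natCast (X^(-2:ℤ)) r, zpow_neg Y (ℓ:ℤ)]; ring
  have hsum : (∑ r ∈ Finset.range (ℓ + 1),
          (q : ℂ) ^ (-(2 * (r : ℂ) - (ℓ : ℂ)) * (s - 1 / 2)) * (q : ℂ) ^ (-(r : ℂ))
            * (1 - (q : ℂ)⁻¹))
      = (X^(ℓ:ℤ) * (Y^(ℓ:ℤ))⁻¹ * (1 - Y^(-2:ℤ)))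
          * (((X^(-2:ℤ))^(ℓ+1) - 1)/(X^(-2:ℤ) - 1)) := by
    rw [Finset.sum_congr rfl hterm, ← Finset.mul_sum, geom_sum_eq hXm2]
  constructor
  · rw [hsum,
        show -(ℓ:ℂ) * (s - 1/2) = ((-ℓ : ℤ):ℂ)*s + ((ℓ : ℤ):ℂ)*(1/2) by push_cast; ring,
        show -((ℓ:ℂ)+1) = ((0:ℤ):ℂ)*s + ((-2*(ℓ+1) : ℤ):ℂ)*(1/2) by push_cast; ring,
        show (ℓ:ℂ) * (s - 1/2) = ((ℓ : ℤ):ℂ)*s + ((-ℓ : ℤ):ℂ)*(1/2) by push_cast; ring,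
        show -(ℓ:ℂ)/2 = ((0:ℤ):ℂ)*s + ((-ℓ : ℤ):ℂ)*(1/2) by push_cast; ring,
        he, he, he, he]
    simp only [sphRHS]
    rw [show (ℓ:ℂ) * s = ((ℓ : ℤ):ℂ)*s + ((0:ℤ):ℂ)*(1/2) by push_cast; ring,
        show (-2) * s - 1 = ((-2:ℤ):ℂ)*s + ((-2:ℤ):ℂ)*(1/2) by push_cast; ring,
        show (-2) * s = ((-2:ℤ):ℂ)*s + ((0:ℤ):ℂ)*(1/2) by push_cast; ring,
        show -(ℓ:ℂ) * s = ((-ℓ : ℤ):ℂ)*s + ((0:ℤ):ℂ)*(1/2) by push_cast; ring,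
        show 2 * s - 1 = ((2:ℤ):ℂ)*s + ((-2:ℤ):ℂ)*(1/2) by push_cast; ring,
        show 2 * s = ((2:ℤ):ℂ)*s + ((0:ℤ):ℂ)*(1/2) by push_cast; ring,
        he, he, he, he, he, he, hqi]
    rw [← zpow_natCast (X^(-2:ℤ)) (ℓ+1), ← zpow_mul,
        show (-2:ℤ) * ((ℓ+1:ℕ):ℤ) = (-(ℓ:ℤ)) + ((-(ℓ:ℤ)) + (-2)) by push_cast; ring,
        show (-2*((ℓ:ℤ)+1)) = (-(ℓ:ℤ)) + ((-(ℓ:ℤ)) + (-2)) by ring]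
    simp only [zpow_add₀ hXne, zpow_add₀ hYne, zpow_neg, zpow_zero, one_mul, mul_one,
      zpow_natCast]
    have hPne : X^ℓ ≠ 0 := pow_ne_zero _ hXne
    have hQne : Y^ℓ ≠ 0 := pow_ne_zero _ hYne
    have hX2' : X^(2:ℤ) ≠ 0 := zpow_ne_zero _ hXne
    have hY2' : Y^(2:ℤ) ≠ 0 := zpow_ne_zero _ hYne
    have hd2 : (1:ℂ) - (X^(2:ℤ))⁻¹ ≠ 0 := by
      rw [sub_ne_zero]
      intro h
      exact hXm2 (by rw [zpow_neg]; exact h.symm)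
    have hd2' : (X^(2:ℤ))⁻¹ - 1 ≠ 0 := by
      rw [sub_ne_zero]
      intro h
      exact hXm2 (by rw [zpow_neg]; exact h)
    have hd3 : (1:ℂ) - X^(2:ℤ) ≠ 0 := sub_ne_zero.mpr (Ne.symm hX2)
    have hd4 : (1:ℂ) + (Y^(2:ℤ))⁻¹ ≠ 0 := by
      have h1 : (0:ℝ) < 1 + q⁻¹ := by positivity
      have h2 : (1:ℂ) + (q:ℂ)⁻¹ ≠ 0 := by
        rw [show (1:ℂ) + (q:ℂ)⁻¹ = ((1+q⁻¹:ℝ):ℂ) by push_cast; ring]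
        exact_mod_cast ne_of_gt h1
      rw [hqi, zpow_neg] at h2
      exact h2
    exact sph_aux (X^ℓ) (X^ℓ)⁻¹ (Y^ℓ) (Y^ℓ)⁻¹ (X^(2:ℤ)) (X^(2:ℤ))⁻¹ (Y^(2:ℤ)) (Y^(2:ℤ))⁻¹
      (mul_inv_cancel₀ hPne) (mul_inv_cancel₀ hQne) (mul_inv_cancel₀ hX2')
      (mul_inv_cancel₀ hY2') hd2' hd2 hd3 hd4
  · simp only [sphRHS]
    rw [show (ℓ:ℂ) * (-s) = -(ℓ:ℂ) * s by ring,
        show (-2) * (-s) - 1 = 2*s - 1 by ring,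
        show (-2) * (-s) = 2*s by ring,
        show -(ℓ:ℂ) * (-s) = (ℓ:ℂ) * s by ring,
        show 2 * (-s) - 1 = -2*s - 1 by ring,
        show 2 * (-s) = -2*s by ring]
    ring
end

section
/- Let k'/k be a quadratic extension of fields with conjugation x ↦ x̄, n ≥ 1, j = j_n the anti-diagonal identity, and r ≥ 1. Suppose x' ∈ M_{r}(k') is lower-left triangular of the form with entries a₁,…,a_{r−1} in the first column (rows 1..r−1), anti-diagonal entries ξ₁,…,ξ_{r−1}, ξ in positions (i, r−i) for i < r and (r,1), and zeros elsewhere, and suppose x' j_r x' = j_r with all ξ_i, ξ ∈ {±1}. Then a_i = 0 whenever ξ = ξ_i. -/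
open Matrix

/-- let `x'` be the `r×r` matrix (over a field of characteristic
≠ 2) whose first column carries `a₁,…,a_{r−1}` in rows `1,…,r−1`, whose
anti-diagonal carries the signs `ξ₁,…,ξ_{r−1}` and `ξ` (at the corner
`(r,1)`), and which is zero elsewhere. If `x' j_r x' = j_r` with all
`ξ_i, ξ ∈ {±1}`, then `a_i = 0` whenever `ξ = ξ_i`. -/
theorem stmt16 (K : Type*) [Field K] (hchar : (2 : K) ≠ 0)
    (r : ℕ) (hr : 1 ≤ r)
    (a : Fin r → K) (ξ : Fin r → K) (ξlast : K)
    (hξ : ∀ i : Fin r, (i : ℕ) + 1 < r → ξ i = 1 ∨ ξ i = -1)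
    (hξlast : ξlast = 1 ∨ ξlast = -1)
    (x' : Matrix (Fin r) (Fin r) K)
    (hx' : ∀ i j : Fin r, x' i j =
      (if (j : ℕ) = 0 ∧ (i : ℕ) + 1 < r then a i else 0) +
      (if (i : ℕ) + (j : ℕ) + 1 = r then
        (if (i : ℕ) + 1 < r then ξ i else ξlast) else 0))
    (J : Matrix (Fin r) (Fin r) K)
    (hJ : J = Matrix.of fun i j : Fin r => if (i : ℕ) + (j : ℕ) + 1 = r then 1 else 0)
    (hrel : x' * J * x' = J) :
    ∀ i : Fin r, (i : ℕ) + 1 < r → ξlast = ξ i → a i = 0 := by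
  intro i hi heq
  have hz : 0 < r := by omega
  have hiv : (i : ℕ) < r := i.2
  let z : Fin r := ⟨0, hz⟩
  let last : Fin r := ⟨r - 1, by omega⟩
  -- first multiplication: (x' * J) i k = x' i (r-1-k)
  have h1 : ∀ k : Fin r, (x' * J) i k = x' i ⟨r - 1 - (k : ℕ), by omega⟩ := by
    intro k
    rw [Matrix.mul_apply]
    rw [Finset.sum_eq_single (⟨r - 1 - (k : ℕ), by omega⟩ : Fin r)]
    · rw [hJ]
      simp only [Matrix.of_apply, Fin.val_mk]
      rw [if_pos (by omega), mul_one]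
    · intro b _ hb
      rw [hJ]
      simp only [Matrix.of_apply]
      rw [if_neg, mul_zero]
      intro hcon
      apply hb
      apply Fin.ext
      simp only [Fin.val_mk]
      have := b.2
      omega
    · intro h; exact absurd (Finset.mem_univ _) h
  have hne : i ≠ last := by
    intro h
    have : (i : ℕ) = r - 1 := congrArg Fin.val h
    omega
  -- pointwise description of the summand
  have hf : ∀ k : Fin r, x' i ⟨r - 1 - (k : ℕ), by omega⟩ * x' k z =
      (if k = i then ξ i * a i else 0) + (if k = last then a i * ξlast else 0) := by
    intro k
    have hkv : (k : ℕ) < r := k.2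
    rw [hx' i ⟨r - 1 - (k : ℕ), by omega⟩, hx' k z]
    simp only [z, Fin.val_mk, true_and]
    by_cases hki : k = i
    · subst hki
      rw [if_pos rfl, if_neg hne]
      rw [if_neg (by omega), if_pos (by omega), if_pos hi,
          if_pos hi, if_neg (by omega)]
      ring
    · by_cases hkl : k = last
      · subst hkl
        rw [if_neg hki, if_pos rfl]
        simp only [last, Fin.val_mk]
        rw [if_pos (by omega), if_neg (by omega), if_neg (by omega),
            if_pos (by omega), if_neg (by omega)]
        ring
      · have h1 : (k : ℕ) ≠ (i : ℕ) := fun h => hki (Fin.ext h)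
        have h2 : (k : ℕ) ≠ r - 1 := fun h => hkl (Fin.ext h)
        rw [if_neg hki, if_neg hkl,
            if_neg (by intro h; exact h1 (by omega)),
            if_neg (by omega)]
        ring
  have key := congrFun (congrFun hrel i) z
  rw [Matrix.mul_apply] at key
  simp only [h1, hf] at key
  rw [Finset.sum_add_distrib, Finset.sum_ite_eq' Finset.univ i,
      Finset.sum_ite_eq' Finset.univ last, if_pos (Finset.mem_univ _),
      if_pos (Finset.mem_univ _), hJ] at key
  simp only [Matrix.of_apply] at key
  rw [if_neg (by show ¬((i : ℕ) + ((z : Fin r) : ℕ) + 1 = r); show ¬((i:ℕ) + 0 + 1 = r); omega)] at key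
  -- key : ξ i * a i + a i * ξlast = 0
  have hξi := hξ i hi
  have hξne : ξ i ≠ 0 := by rcases hξi with h | h <;> rw [h] <;> simp
  rw [heq] at key
  have h2 : a i * (2 * ξ i) = 0 := by linear_combination key
  rcases mul_eq_zero.mp h2 with h | h
  · exact h
  · exact absurd h (mul_ne_zero hchar hξne)
end
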